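/- arXiv:1301.2341 — 8 statements merged into one kernel-verified Lean document; each statement's English description precedes it below -/
import Mathlib

section
/- Let G be a finite group with trivial centre, K a normal subgroup of G, and a a non-identity element of G whose G-conjugacy class equals its K-conjugacy class. Then for every x in G \ K, the distance in the commuting graph of G from x to the conjugacy class a^G is at most 4. -/
/-- The commuting graph of a group: vertices are elements, two distinct
non-identity elements are adjacent iff they commute. -/
def commGraph (G : Type*) [Group G] : SimpleGraph G where
  Adj x y := x ≠ y ∧ x ≠ 1 ∧ y ≠ 1 ∧ x * y = y * x
  symm := ⟨by rintro x y ⟨h1, h2, h3, h4⟩; exact ⟨h1.symm, h3, h2, h4.symm⟩⟩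
  loopless := ⟨by rintro x ⟨h, -⟩; exact h rfl⟩

/-- If two nonidentity elements commute, there is a walk of length at most 1
between them in the commuting graph. -/
lemma commGraph_reach_one {G : Type*} [Group G] {x y : G} (hx : x ≠ 1) (hy : y ≠ 1)
    (hxy : x * y = y * x) : ∃ w : (commGraph G).Walk x y, w.length ≤ 1 := by
  by_cases h : x = y
  · subst h; exact ⟨SimpleGraph.Walk.nil, by simp⟩
  · exact ⟨SimpleGraph.Walk.cons ⟨h, hx, hy, hxy⟩ SimpleGraph.Walk.nil, le_rfl⟩

lemma commGraph_reach_trans {G : Type*} [Group G] {x y z : G} {m n : ℕ}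
    (h1 : ∃ w : (commGraph G).Walk x y, w.length ≤ m)
    (h2 : ∃ w : (commGraph G).Walk y z, w.length ≤ n) :
    ∃ w : (commGraph G).Walk x z, w.length ≤ m + n := by
  obtain ⟨w1, hw1⟩ := h1
  obtain ⟨w2, hw2⟩ := h2
  exact ⟨w1.append w2, by rw [SimpleGraph.Walk.length_append]; omega⟩

theorem stmt4 {G : Type*} [Group G] [Fintype G] (hZ : Subgroup.center G = ⊥)
    (K : Subgroup G) (hK : K.Normal) (a : G) (ha : a ≠ 1)
    (hclass : ∀ g : G, ∃ k ∈ K, g⁻¹ * a * g = k⁻¹ * a * k)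
    (x : G) (hxK : x ∉ K) :
    ∃ g : G, ∃ w : (commGraph G).Walk x (g⁻¹ * a * g), w.length ≤ 4 := by
  classical
  haveI := hK
  have hx1 : x ≠ 1 := fun h => hxK (h ▸ K.one_mem)
  -- the image of x in G/K is nontrivial
  have hxb : (QuotientGroup.mk x : G ⧸ K) ≠ 1 := by
    simpa [QuotientGroup.eq_one_iff] using hxK
  set xb : G ⧸ K := QuotientGroup.mk x with hxbdef
  have hordb_ne_one : orderOf xb ≠ 1 := by
    simpa [orderOf_eq_one_iff] using hxb
  set q : ℕ := (orderOf xb).minFac with hqdef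
  have hq : q.Prime := Nat.minFac_prime hordb_ne_one
  haveI : Fact q.Prime := ⟨hq⟩
  have hq_dvd_xb : q ∣ orderOf xb := Nat.minFac_dvd _
  have hmapdvd : orderOf xb ∣ orderOf x := orderOf_map_dvd (QuotientGroup.mk' K) x
  have hq_dvd_x : q ∣ orderOf x := hq_dvd_xb.trans hmapdvd
  -- a q-element u commuting with x
  obtain ⟨u', hu'⟩ : ∃ u' : Subgroup.zpowers x, orderOf u' = q := by
    apply exists_prime_orderOf_dvd_card' (G := Subgroup.zpowers x) q
    rw [Nat.card_zpowers]; exact hq_dvd_x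
  set u : G := (u' : G) with hudef
  have hu_ord : orderOf u = q := by rw [hudef, Subgroup.orderOf_coe]; exact hu'
  have hu1 : u ≠ 1 := by
    intro h
    rw [h, orderOf_one] at hu_ord
    exact hq.one_lt.ne' hu_ord.symm
  have hux : x * u = u * x := by
    obtain ⟨n, hn⟩ := u'.2
    rw [hudef, ← hn]
    exact ((Commute.refl x).zpow_right n).eq
  -- the centralizer of a surjects onto G/K
  have hsurj : Function.Surjective
      ((QuotientGroup.mk' K).comp (Subgroup.centralizer {a}).subtype) := by
    intro gb
    obtain ⟨g, rfl⟩ := QuotientGroup.mk_surjective gb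
    obtain ⟨k, hkK, hk⟩ := hclass g
    refine ⟨⟨g * k⁻¹, ?_⟩, ?_⟩
    · rw [Subgroup.mem_centralizer_iff]
      intro y hy
      rw [Set.mem_singleton_iff] at hy
      rw [hy]
      -- goal : a * (g * k⁻¹) = (g * k⁻¹) * a  (need to check direction)
      have : g⁻¹ * a * g * k⁻¹ = k⁻¹ * a := by
        rw [hk]; group
      calc a * (g * k⁻¹) = g * (g⁻¹ * a * g * k⁻¹) := by group
        _ = g * (k⁻¹ * a) := by rw [this]
        _ = (g * k⁻¹) * a := by group
    · simp only [MonoidHom.comp_apply, Subgroup.coe_subtype, QuotientGroup.mk'_apply]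
      rw [QuotientGroup.eq]
      simpa using K.inv_mem hkK
  have hq_dvd_C : q ∣ Nat.card (Subgroup.centralizer ({a} : Set G)) := by
    refine dvd_trans ?_ (Subgroup.card_dvd_of_surjective _ hsurj)
    exact hq_dvd_xb.trans (orderOf_dvd_natCard xb)
  -- an element t of order q centralizing a
  obtain ⟨t', ht'⟩ := exists_prime_orderOf_dvd_card' (G := Subgroup.centralizer ({a} : Set G)) q hq_dvd_C
  set t : G := (t' : G) with htdef
  have ht_ord : orderOf t = q := by rw [htdef, Subgroup.orderOf_coe]; exact ht'
  have ht1 : t ≠ 1 := by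
    intro h
    rw [h, orderOf_one] at ht_ord
    exact hq.one_lt.ne' ht_ord.symm
  have hta : a * t = t * a := by
    have := t'.2
    rw [Subgroup.mem_centralizer_iff] at this
    exact this a rfl
  -- Sylow q-subgroups containing t and u
  have hpt : IsPGroup q (Subgroup.zpowers t) :=
    IsPGroup.of_card (by rw [Nat.card_zpowers, ht_ord, pow_one])
  obtain ⟨T, hT⟩ := hpt.exists_le_sylow
  have hpu : IsPGroup q (Subgroup.zpowers u) :=
    IsPGroup.of_card (by rw [Nat.card_zpowers, hu_ord, pow_one])
  obtain ⟨S, hS⟩ := hpu.exists_le_sylow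
  obtain ⟨h, hh⟩ := MulAction.exists_smul_eq G T S
  -- a nontrivial element of the center of T
  have htT : t ∈ (T : Subgroup G) := hT (Subgroup.mem_zpowers t)
  haveI : Nontrivial (T : Subgroup G) :=
    ⟨⟨⟨t, htT⟩, 1, by simp [ht1]⟩⟩
  haveI : Finite (T : Subgroup G) := Subtype.finite
  have hcent : Nontrivial (Subgroup.center ((T : Subgroup G))) :=
    (T.isPGroup').center_nontrivial
  obtain ⟨z', hz'⟩ := exists_ne (1 : Subgroup.center ((T : Subgroup G)))
  set z : G := ((z' : (T : Subgroup G)) : G) with hzdef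
  have hz1 : z ≠ 1 := by
    intro h
    apply hz'
    ext
    simpa [hzdef] using h
  have hzcomm : ∀ s ∈ (T : Subgroup G), z * s = s * z := by
    intro s hs
    have := Subgroup.mem_center_iff.mp z'.2 ⟨s, hs⟩
    have := congrArg (Subtype.val) this
    simpa [hzdef] using this.symm
  -- conjugate by h
  have hu_in_S : u ∈ (S : Subgroup G) := hS (Subgroup.mem_zpowers u)
  have hu_in : h⁻¹ * u * h ∈ (T : Subgroup G) := by
    rw [← hh] at hu_in_S
    have : u ∈ ((h • T : Sylow q G) : Set G) := hu_in_S
    rw [Sylow.coe_smul] at this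
    rw [Set.mem_smul_set_iff_inv_smul_mem] at this
    have h' : h⁻¹ * u * h ∈ T := by simpa [MulAut.smul_def, MulAut.conj] using this
    exact h'
  -- the four steps
  refine ⟨h⁻¹, ?_⟩
  have htarget : (h⁻¹)⁻¹ * a * h⁻¹ = h * a * h⁻¹ := by group
  rw [htarget]
  have step1 : ∃ w : (commGraph G).Walk x u, w.length ≤ 1 :=
    commGraph_reach_one hx1 hu1 hux
  have step2 : ∃ w : (commGraph G).Walk u (h * z * h⁻¹), w.length ≤ 1 := by
    apply commGraph_reach_one hu1
    · simp [hz1]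
    · have := hzcomm _ hu_in
      calc u * (h * z * h⁻¹) = h * ((h⁻¹ * u * h) * z) * h⁻¹ := by group
        _ = h * (z * (h⁻¹ * u * h)) * h⁻¹ := by rw [this]
        _ = (h * z * h⁻¹) * u := by group
  have step3 : ∃ w : (commGraph G).Walk (h * z * h⁻¹) (h * t * h⁻¹), w.length ≤ 1 := by
    apply commGraph_reach_one
    · simp [hz1]
    · simp [ht1]
    · have := hzcomm t htT
      calc (h * z * h⁻¹) * (h * t * h⁻¹) = h * (z * t) * h⁻¹ := by group
        _ = h * (t * z) * h⁻¹ := by rw [this]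
        _ = (h * t * h⁻¹) * (h * z * h⁻¹) := by group
  have step4 : ∃ w : (commGraph G).Walk (h * t * h⁻¹) (h * a * h⁻¹), w.length ≤ 1 := by
    apply commGraph_reach_one
    · simp [ht1]
    · simp [ha]
    · calc (h * t * h⁻¹) * (h * a * h⁻¹) = h * (t * a) * h⁻¹ := by group
        _ = h * (a * t) * h⁻¹ := by rw [← hta]
        _ = (h * a * h⁻¹) * (h * t * h⁻¹) := by group
  have : ∃ w : (commGraph G).Walk x (h * a * h⁻¹), w.length ≤ 1 + 1 + 1 + 1 :=
    commGraph_reach_trans (commGraph_reach_trans (commGraph_reach_trans step1 step2) step3) step4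
  simpa using this
end

section
/- Let G be a finite group with trivial centre having at least two conjugacy classes of involutions, and let I be the set of involutions in G. Then any two involutions in G have distance at most 3 in the commuting graph of G, where moreover the connecting path can be chosen to consist entirely of involutions. -/
private lemma inv_mul_self_eq_one {G : Type*} [Group G] {a : G} (ha : orderOf a = 2) :
    a * a = 1 := by
  have := pow_orderOf_eq_one a
  rwa [ha, pow_two] at this

private lemma involNeOne {G : Type*} [Group G] {a : G} (ha : orderOf a = 2) : a ≠ 1 := by
  intro h; rw [h, orderOf_one] at ha; norm_num at ha

private lemma inv_inv_self {G : Type*} [Group G] {a : G} (ha : orderOf a = 2) : a⁻¹ = a :=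
  inv_eq_of_mul_eq_one_right (inv_mul_self_eq_one ha)

/-- Key fact: two non-conjugate involutions admit a common commuting involution. -/
private lemma keyA {G : Type*} [Group G] [Fintype G] {a u : G}
    (ha : orderOf a = 2) (hu : orderOf u = 2) (h : ¬ IsConj a u) :
    ∃ z : G, orderOf z = 2 ∧ Commute a z ∧ Commute u z := by
  have ha2 := inv_mul_self_eq_one ha
  have hu2 := inv_mul_self_eq_one hu
  have hainv := inv_inv_self ha
  have huinv := inv_inv_self hu
  set r := a * u with hr
  have hrinv : r⁻¹ = u * a := by rw [hr, mul_inv_rev, hainv, huinv]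
  have hconja : ∀ k : ℕ, a * r ^ k * a = (r ^ k)⁻¹ := by
    intro k
    have h1 : a * r * a⁻¹ = r⁻¹ := by
      rw [hainv, hrinv, hr]
      calc a * (a * u) * a = (a * a) * (u * a) := by group
        _ = u * a := by rw [ha2, one_mul]
    calc a * r ^ k * a = a * r ^ k * a⁻¹ := by rw [hainv]
      _ = (a * r * a⁻¹) ^ k := by rw [conj_pow]
      _ = (r ^ k)⁻¹ := by rw [h1, inv_pow]
  have hconju : ∀ k : ℕ, u * r ^ k * u = (r ^ k)⁻¹ := by
    intro k
    have h1 : u * r * u⁻¹ = r⁻¹ := by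
      rw [huinv, hrinv, hr]
      calc u * (a * u) * u = (u * a) * (u * u) := by group
        _ = u * a := by rw [hu2, mul_one]
    calc u * r ^ k * u = u * r ^ k * u⁻¹ := by rw [huinv]
      _ = (u * r * u⁻¹) ^ k := by rw [conj_pow]
      _ = (r ^ k)⁻¹ := by rw [h1, inv_pow]
  rcases Nat.even_or_odd (orderOf r) with heven | hodd
  · -- even order : take z = r ^ k
    obtain ⟨k, hk⟩ := heven
    have hrne : r ≠ 1 := by
      intro h1
      apply h
      have : u = a := by
        have : u = a⁻¹ := eq_inv_of_mul_eq_one_right h1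
        rw [this, hainv]
      rw [this]
    have hk0 : k ≠ 0 := by
      intro h0
      have := orderOf_pos r
      omega
    refine ⟨r ^ k, ?_, ?_, ?_⟩
    · have hz1 : r ^ k ≠ 1 := by
        intro h1
        have hd := orderOf_dvd_of_pow_eq_one h1
        have := Nat.le_of_dvd (Nat.pos_of_ne_zero hk0) hd
        omega
      have hz2 : (r ^ k) ^ 2 = 1 := by
        rw [← pow_mul, show k * 2 = orderOf r by omega]
        exact pow_orderOf_eq_one r
      exact orderOf_eq_prime hz2 hz1
    · -- Commute a (r ^ k)
      have hzz : (r ^ k) * (r ^ k) = 1 := by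
        rw [← pow_add, show k + k = orderOf r by omega, pow_orderOf_eq_one]
      have hzinv : (r ^ k)⁻¹ = r ^ k := inv_eq_of_mul_eq_one_right hzz
      have h3 : a * r ^ k * a = r ^ k := by rw [hconja k, hzinv]
      show a * r ^ k = r ^ k * a
      calc a * r ^ k = (a * r ^ k * a) * a := by
            rw [mul_assoc, ha2, mul_one]
        _ = r ^ k * a := by rw [h3]
    · have hzz : (r ^ k) * (r ^ k) = 1 := by
        rw [← pow_add, show k + k = orderOf r by omega, pow_orderOf_eq_one]
      have hzinv : (r ^ k)⁻¹ = r ^ k := inv_eq_of_mul_eq_one_right hzz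
      have h3 : u * r ^ k * u = r ^ k := by rw [hconju k, hzinv]
      show u * r ^ k = r ^ k * u
      calc u * r ^ k = (u * r ^ k * u) * u := by
            rw [mul_assoc, hu2, mul_one]
        _ = r ^ k * u := by rw [h3]
  · -- odd order : a and u are conjugate, contradiction
    exfalso
    obtain ⟨s, hs⟩ := hodd
    apply h
    rw [isConj_iff]
    refine ⟨r ^ s, ?_⟩
    have h4 : (r ^ s)⁻¹ = a * r ^ s * a := (hconja s).symm
    calc r ^ s * a * (r ^ s)⁻¹ = r ^ s * a * (a * r ^ s * a) := by rw [h4]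
      _ = r ^ s * (a * a) * r ^ s * a := by group
      _ = r ^ (s + s) * a := by rw [ha2, mul_one, ← pow_add]
      _ = (r ^ (2 * s + 1)) * r⁻¹ * a := by
            rw [show 2 * s + 1 = (s + s) + 1 by ring, pow_succ]
            group
      _ = r⁻¹ * a := by rw [← hs, pow_orderOf_eq_one, one_mul]
      _ = u * (a * a) := by rw [hrinv]; group
      _ = u := by rw [ha2, mul_one]

/-- Every involution commutes with an involution not conjugate to it,
provided there are at least two classes of involutions. -/
private lemma keyB {G : Type*} [Group G] [Fintype G] {i j : G}
    (hi : orderOf i = 2) (hj : orderOf j = 2) (hij : ¬ IsConj i j)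
    {a : G} (ha : orderOf a = 2) :
    ∃ p : G, orderOf p = 2 ∧ Commute a p ∧ ¬ IsConj a p := by
  by_contra hcon
  push_neg at hcon
  have hall : ∀ u : G, orderOf u = 2 → IsConj a u := by
    intro u hu
    by_contra hnc
    obtain ⟨z, hz, haz, huz⟩ := keyA ha hu hnc
    have hzconj : IsConj a z := hcon z hz haz
    obtain ⟨g, hg⟩ := isConj_iff.mp hzconj
    have hvconj : IsConj u (g⁻¹ * u * g) := isConj_iff.mpr ⟨g⁻¹, by group⟩
    have hsemi : SemiconjBy g⁻¹ u (g⁻¹ * u * g) := by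
      show g⁻¹ * u = (g⁻¹ * u * g) * g⁻¹
      group
    have hvord : orderOf (g⁻¹ * u * g) = 2 := by
      rw [← hsemi.orderOf_eq g⁻¹]; exact hu
    have hcomm : Commute a (g⁻¹ * u * g) := by
      have h1 : u * (g * a * g⁻¹) = (g * a * g⁻¹) * u := by rw [hg]; exact huz
      show a * (g⁻¹ * u * g) = (g⁻¹ * u * g) * a
      calc a * (g⁻¹ * u * g) = g⁻¹ * ((g * a * g⁻¹) * u) * g := by group
        _ = g⁻¹ * (u * (g * a * g⁻¹)) * g := by rw [h1]
        _ = (g⁻¹ * u * g) * a := by group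
    have h2 : IsConj a (g⁻¹ * u * g) := hcon _ hvord hcomm
    exact hnc (h2.trans hvconj.symm)
  exact hij ((hall i hi).symm.trans (hall j hj))

theorem stmt5 {G : Type*} [Group G] [Fintype G] (hZ : Subgroup.center G = ⊥)
    (i j : G) (hi : orderOf i = 2) (hj : orderOf j = 2) (hij : ¬ IsConj i j) :
    ∀ x y : G, orderOf x = 2 → orderOf y = 2 →
      ∃ p : (commGraph G).Walk x y, p.length ≤ 3 ∧ ∀ z ∈ p.support, orderOf z = 2 := by
  intro x y hx hy
  have hx1 : x ≠ 1 := involNeOne hx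
  have hy1 : y ≠ 1 := involNeOne hy
  by_cases hxy : x = y
  · subst hxy
    exact ⟨SimpleGraph.Walk.nil, by simp, by simp [hx]⟩
  by_cases hcomm : x * y = y * x
  · -- direct edge
    refine ⟨SimpleGraph.Walk.cons (show (commGraph G).Adj x y from ⟨hxy, hx1, hy1, hcomm⟩) SimpleGraph.Walk.nil, by simp, ?_⟩
    intro z hz
    simp only [SimpleGraph.Walk.support_cons, SimpleGraph.Walk.support_nil,
      List.mem_cons, List.mem_singleton] at hz
    rcases hz with rfl | rfl | h
    · exact hx
    · exact hy
    · simp at h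
  by_cases hconj : IsConj x y
  · -- conjugate non-commuting involutions : length ≤ 3
    obtain ⟨p, hp, hxp, hnp⟩ := keyB hi hj hij hx
    have hp1 : p ≠ 1 := involNeOne hp
    have hxp_ne : x ≠ p := fun hh => hnp (hh ▸ IsConj.refl x)
    have hnpy : ¬ IsConj p y := fun hc => hnp (hconj.trans hc.symm)
    have hpy_ne : p ≠ y := fun hh => hnpy (hh ▸ IsConj.refl p)
    by_cases hpyc : p * y = y * p
    · refine ⟨SimpleGraph.Walk.cons (show (commGraph G).Adj x p from ⟨hxp_ne, hx1, hp1, hxp⟩)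
        (SimpleGraph.Walk.cons (show (commGraph G).Adj p y from ⟨hpy_ne, hp1, hy1, hpyc⟩) SimpleGraph.Walk.nil), by simp, ?_⟩
      intro z hz
      simp only [SimpleGraph.Walk.support_cons, SimpleGraph.Walk.support_nil,
        List.mem_cons, List.mem_singleton] at hz
      rcases hz with rfl | rfl | rfl | h
      · exact hx
      · exact hp
      · exact hy
      · simp at h
    · obtain ⟨w, hw, hpw, hyw⟩ := keyA hp hy hnpy
      have hw1 : w ≠ 1 := involNeOne hw
      have hpw_ne : p ≠ w := by
        intro hh
        exact hpyc (by rw [hh]; exact hyw.symm)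
      have hwy_ne : w ≠ y := by
        intro hh
        exact hpyc (by rw [← hh]; exact hpw)
      refine ⟨SimpleGraph.Walk.cons (show (commGraph G).Adj x p from ⟨hxp_ne, hx1, hp1, hxp⟩)
        (SimpleGraph.Walk.cons (show (commGraph G).Adj p w from ⟨hpw_ne, hp1, hw1, hpw⟩)
          (SimpleGraph.Walk.cons (show (commGraph G).Adj w y from ⟨hwy_ne, hw1, hy1, hyw.symm.eq⟩) SimpleGraph.Walk.nil)),
        by simp, ?_⟩
      intro z hz
      simp only [SimpleGraph.Walk.support_cons, SimpleGraph.Walk.support_nil,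
        List.mem_cons, List.mem_singleton] at hz
      rcases hz with rfl | rfl | rfl | rfl | h
      · exact hx
      · exact hp
      · exact hw
      · exact hy
      · simp at h
  · -- non-conjugate : common commuting involution, length 2
    obtain ⟨z, hz, hxz, hyz⟩ := keyA hx hy hconj
    have hz1 : z ≠ 1 := involNeOne hz
    have hxz_ne : x ≠ z := by
      intro hh
      exact hcomm (by rw [hh]; exact hyz.symm)
    have hzy_ne : z ≠ y := by
      intro hh
      exact hcomm (by rw [← hh]; exact hxz)
    refine ⟨SimpleGraph.Walk.cons (show (commGraph G).Adj x z from ⟨hxz_ne, hx1, hz1, hxz⟩)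
      (SimpleGraph.Walk.cons (show (commGraph G).Adj z y from ⟨hzy_ne, hz1, hy1, hyz.symm.eq⟩) SimpleGraph.Walk.nil), by simp, ?_⟩
    intro z' hz'
    simp only [SimpleGraph.Walk.support_cons, SimpleGraph.Walk.support_nil,
      List.mem_cons, List.mem_singleton] at hz'
    rcases hz' with rfl | rfl | rfl | h
    · exact hx
    · exact hz
    · exact hy
    · simp at h
end

section
/- Let G be a finite group with trivial centre having at least two conjugacy classes of involutions. Then all elements of even order of G lie in a single connected component of the commuting graph of G, and any two elements of even order are at distance at most 5. -/
section Aux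

variable {G : Type*} [Group G]

private lemma inv_eq_self' {p : G} (hp : p * p = 1) : p⁻¹ = p :=
  inv_eq_of_mul_eq_one_right hp

private lemma conj_rel_left {p q : G} (hp : p * p = 1) (hq : q * q = 1) :
    p * (p * q) * p = (p * q)⁻¹ := by
  have h1 : (p * q)⁻¹ = q * p := by
    rw [mul_inv_rev, inv_eq_self' hp, inv_eq_self' hq]
  calc p * (p * q) * p = (p * p) * (q * p) := by group
  _ = q * p := by rw [hp, one_mul]
  _ = (p * q)⁻¹ := h1.symm

private lemma conj_rel_right {p q : G} (hp : p * p = 1) (hq : q * q = 1) :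
    q * (p * q) * q = (p * q)⁻¹ := by
  have h1 : (p * q)⁻¹ = q * p := by
    rw [mul_inv_rev, inv_eq_self' hp, inv_eq_self' hq]
  calc q * (p * q) * q = (q * p) * (q * q) := by group
  _ = q * p := by rw [hq, mul_one]
  _ = (p * q)⁻¹ := h1.symm

private lemma conj_pow_inv {r c : G} (hr : r * r = 1) (h : r * c * r = c⁻¹) (k : ℕ) :
    r * c ^ k * r = (c ^ k)⁻¹ := by
  induction k with
  | zero => simpa using hr
  | succ n ih =>
    have key : r * c ^ (n + 1) * r = (r * c ^ n * r) * (r * c * r) := by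
      calc r * c ^ (n + 1) * r = r * (c ^ n * c) * r := by rw [pow_succ]
      _ = r * c ^ n * (r * r) * c * r := by rw [hr]; group
      _ = (r * c ^ n * r) * (r * c * r) := by group
    rw [key, ih, h, pow_succ', mul_inv_rev]

private lemma odd_isConj {p q : G} (hp : p * p = 1) (hq : q * q = 1)
    (hodd : Odd (orderOf (p * q))) : IsConj p q := by
  obtain ⟨k, hk⟩ := hodd
  have hrelk := conj_pow_inv hp (conj_rel_left hp hq) k
  have hc1 : (p * q) ^ (2 * k + 1) = 1 := by rw [← hk]; exact pow_orderOf_eq_one (p * q)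
  rw [isConj_iff]
  refine ⟨(p * q) ^ k, ?_⟩
  have h1 : (p * q) ^ k * p = p * ((p * q) ^ k)⁻¹ := by
    calc (p * q) ^ k * p = (p * p) * (p * q) ^ k * p := by rw [hp, one_mul]
    _ = p * (p * (p * q) ^ k * p) := by group
    _ = p * ((p * q) ^ k)⁻¹ := by rw [hrelk]
  have h2 : ((p * q) ^ k)⁻¹ * ((p * q) ^ k)⁻¹ = p * q := by
    have h3 : ((p * q) ^ k * (p * q) ^ k) * (p * q) = 1 := by
      have h4 : (p * q) ^ k * (p * q) ^ k * (p * q) = (p * q) ^ (2 * k + 1) := by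
        rw [← pow_add, ← pow_succ]
        congr 1
        omega
      rw [h4, hc1]
    have h5 : ((p * q) ^ k * (p * q) ^ k)⁻¹ = p * q := inv_eq_of_mul_eq_one_right h3
    rw [← mul_inv_rev]
    exact h5
  calc (p * q) ^ k * p * ((p * q) ^ k)⁻¹
      = p * (((p * q) ^ k)⁻¹ * ((p * q) ^ k)⁻¹) := by rw [h1]; group
  _ = p * (p * q) := by rw [h2]
  _ = q := by rw [← mul_assoc, hp, one_mul]

/-- middle element of the dihedral group generated by two non-conjugate involutions -/
private lemma exists_mid [Finite G] {p q : G} (hp1 : p ≠ 1) (hq1 : q ≠ 1)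
    (hp : p * p = 1) (hq : q * q = 1) (hne : p ≠ q) (hnc : ¬ IsConj p q) :
    ∃ z : G, z ≠ 1 ∧ z * z = 1 ∧ p * z = z * p ∧ q * z = z * q ∧ z ≠ p ∧ z ≠ q := by
  have hcne : p * q ≠ 1 := by
    intro h
    have h2 : q = p⁻¹ := eq_inv_of_mul_eq_one_right h
    rw [inv_eq_self' hp] at h2
    exact hne h2.symm
  have hpos : 0 < orderOf (p * q) := orderOf_pos (p * q)
  have hodd : ¬ Odd (orderOf (p * q)) := fun h => hnc (odd_isConj hp hq h)
  obtain ⟨m, hm⟩ := Nat.not_odd_iff_even.mp hodd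
  have hmpos : 0 < m := by omega
  have hzz : (p * q) ^ m * (p * q) ^ m = 1 := by
    rw [← pow_add, ← hm, pow_orderOf_eq_one]
  have hzinv : ((p * q) ^ m)⁻¹ = (p * q) ^ m := inv_eq_self' hzz
  have hz1 : (p * q) ^ m ≠ 1 := by
    intro h
    have h2 := Nat.le_of_dvd hmpos (orderOf_dvd_of_pow_eq_one h)
    omega
  have hpk : p * (p * q) ^ m * p = (p * q) ^ m := by
    rw [conj_pow_inv hp (conj_rel_left hp hq) m, hzinv]
  have hqk : q * (p * q) ^ m * q = (p * q) ^ m := by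
    rw [conj_pow_inv hq (conj_rel_right hp hq) m, hzinv]
  have hpcomm : p * (p * q) ^ m = (p * q) ^ m * p := by
    calc p * (p * q) ^ m = p * (p * q) ^ m * (p * p) := by rw [hp, mul_one]
    _ = (p * (p * q) ^ m * p) * p := by group
    _ = (p * q) ^ m * p := by rw [hpk]
  have hqcomm : q * (p * q) ^ m = (p * q) ^ m * q := by
    calc q * (p * q) ^ m = q * (p * q) ^ m * (q * q) := by rw [hq, mul_one]
    _ = (q * (p * q) ^ m * q) * q := by group
    _ = (p * q) ^ m * q := by rw [hqk]
  have horder : ∀ r : G, r * r = 1 → r * (p * q) * r = (p * q)⁻¹ →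
      (p * q) ^ m = r → m = 1 := by
    intro r hr hrel h
    have hcomm : r * (p * q) = (p * q) * r := by
      rw [← h, ← pow_succ, ← pow_succ']
    have hcc : (p * q)⁻¹ = p * q := by
      calc (p * q)⁻¹ = r * (p * q) * r := hrel.symm
      _ = (p * q) * (r * r) := by rw [hcomm]; group
      _ = p * q := by rw [hr, mul_one]
    have hc2 := mul_inv_cancel (p * q)
    rw [hcc] at hc2
    have hdvd : orderOf (p * q) ∣ 2 := orderOf_dvd_of_pow_eq_one (by rw [pow_two]; exact hc2)
    have hle := Nat.le_of_dvd (by norm_num) hdvd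
    omega
  refine ⟨(p * q) ^ m, hz1, hzz, hpcomm, hqcomm, ?_, ?_⟩
  · intro h
    have hm1 := horder p hp (conj_rel_left hp hq) h
    rw [hm1, pow_one] at h
    exact hq1 (mul_left_cancel (h.trans (mul_one p).symm))
  · intro h
    have hm1 := horder q hq (conj_rel_right hp hq) h
    rw [hm1, pow_one] at h
    exact hp1 (mul_right_cancel (h.trans (one_mul q).symm))

/-- every involution commutes with an involution not conjugate to it,
provided some involution is not conjugate to it -/
private lemma exists_nonconj_comm [Finite G] {u a : G} (hu1 : u ≠ 1) (hu : u * u = 1)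
    (ha1 : a ≠ 1) (ha : a * a = 1) (hnc : ¬ IsConj u a) :
    ∃ s : G, s ≠ 1 ∧ s * s = 1 ∧ u * s = s * u ∧ ¬ IsConj s u := by
  have hne : u ≠ a := fun h => hnc (h ▸ IsConj.refl u)
  obtain ⟨z, hz1, hz2, hzu, hza, hzneu, hznea⟩ := exists_mid hu1 ha1 hu ha hne hnc
  by_cases hcz : IsConj z u
  · obtain ⟨g, hg⟩ := isConj_iff.mp hcz
    refine ⟨g * a * g⁻¹, ?_, ?_, ?_, ?_⟩
    · intro h
      apply ha1
      have h2 : g * a = g := by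
        have h3 := congrArg (· * g) h
        simpa [mul_assoc] using h3
      have h4 := congrArg (g⁻¹ * ·) h2
      simpa [← mul_assoc] using h4
    · calc (g * a * g⁻¹) * (g * a * g⁻¹) = g * (a * a) * g⁻¹ := by group
      _ = 1 := by rw [ha]; group
    · rw [← hg]
      calc (g * z * g⁻¹) * (g * a * g⁻¹) = g * (z * a) * g⁻¹ := by group
      _ = g * (a * z) * g⁻¹ := by rw [← hza]
      _ = (g * a * g⁻¹) * (g * z * g⁻¹) := by group
    · intro h
      have h2 : IsConj a (g * a * g⁻¹) := isConj_iff.mpr ⟨g, rfl⟩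
      exact hnc (h2.trans h).symm
  · exact ⟨z, hz1, hz2, hzu, hcz⟩

private lemma walk3 [Finite G] {u v i j : G} (hu1 : u ≠ 1) (hu : u * u = 1)
    (hv1 : v ≠ 1) (hv : v * v = 1) (hi1 : i ≠ 1) (hi : i * i = 1)
    (hj1 : j ≠ 1) (hj : j * j = 1) (hij : ¬ IsConj i j) :
    ∃ p : (commGraph G).Walk u v, p.length ≤ 3 := by
  by_cases huv : u = v
  · subst huv
    exact ⟨SimpleGraph.Walk.nil, by simp⟩
  by_cases hconj : IsConj u v
  · obtain ⟨a, ha1, ha, hau⟩ : ∃ a : G, a ≠ 1 ∧ a * a = 1 ∧ ¬ IsConj u a := by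
      by_cases hci : IsConj u i
      · exact ⟨j, hj1, hj, fun h => hij (hci.symm.trans h)⟩
      · exact ⟨i, hi1, hi, hci⟩
    obtain ⟨s, hs1, hs2, hus, hsnc⟩ := exists_nonconj_comm hu1 hu ha1 ha hau
    have hsv : ¬ IsConj s v := fun h => hsnc (h.trans hconj.symm)
    have hsnev : s ≠ v := fun h => hsv (h ▸ IsConj.refl s)
    obtain ⟨z, hz1, hz2, hsz, hvz, hzns, hznv⟩ := exists_mid hs1 hv1 hs2 hv hsnev hsv
    have hune : u ≠ s := by
      intro h
      exact hsnc (by rw [← h])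
    refine ⟨SimpleGraph.Walk.cons (show (commGraph G).Adj _ _ from ⟨hune, hu1, hs1, hus⟩)
      (SimpleGraph.Walk.cons (show (commGraph G).Adj _ _ from ⟨Ne.symm hzns, hs1, hz1, hsz⟩)
      (SimpleGraph.Walk.cons (show (commGraph G).Adj _ _ from ⟨hznv, hz1, hv1, hvz.symm⟩) SimpleGraph.Walk.nil)), by simp⟩
  · obtain ⟨z, hz1, hz2, huz, hvz, hznu, hznv⟩ := exists_mid hu1 hv1 hu hv huv hconj
    refine ⟨SimpleGraph.Walk.cons (show (commGraph G).Adj _ _ from ⟨Ne.symm hznu, hu1, hz1, huz⟩)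
      (SimpleGraph.Walk.cons (show (commGraph G).Adj _ _ from ⟨hznv, hz1, hv1, hvz.symm⟩) SimpleGraph.Walk.nil), by simp⟩

private lemma exists_invol_pow [Finite G] {x : G} (hx : 2 ∣ orderOf x) :
    ∃ u : G, u ≠ 1 ∧ u * u = 1 ∧ x * u = u * x := by
  obtain ⟨m, hm⟩ := hx
  have hpos : 0 < orderOf x := orderOf_pos x
  have hmpos : 0 < m := by omega
  refine ⟨x ^ m, ?_, ?_, ?_⟩
  · intro h
    have h2 := Nat.le_of_dvd hmpos (orderOf_dvd_of_pow_eq_one h)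
    omega
  · rw [← pow_add]
    have h3 : m + m = orderOf x := by omega
    rw [h3, pow_orderOf_eq_one]
  · exact ((Commute.refl x).pow_right m).eq

end Aux

theorem stmt6 {G : Type*} [Group G] [Fintype G] (hZ : Subgroup.center G = ⊥)
    (i j : G) (hi : orderOf i = 2) (hj : orderOf j = 2) (hij : ¬ IsConj i j) :
    ∀ x y : G, 2 ∣ orderOf x → 2 ∣ orderOf y →
      ∃ p : (commGraph G).Walk x y, p.length ≤ 5 := by
  intro x y hx hy
  have hi2 : i * i = 1 := by
    have h := pow_orderOf_eq_one i
    rw [hi, pow_two] at h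
    exact h
  have hj2 : j * j = 1 := by
    have h := pow_orderOf_eq_one j
    rw [hj, pow_two] at h
    exact h
  have hi1 : i ≠ 1 := by
    intro h
    rw [h, orderOf_one] at hi
    norm_num at hi
  have hj1 : j ≠ 1 := by
    intro h
    rw [h, orderOf_one] at hj
    norm_num at hj
  have hx1 : x ≠ 1 := by
    intro h
    rw [h, orderOf_one] at hx
    norm_num at hx
  have hy1 : y ≠ 1 := by
    intro h
    rw [h, orderOf_one] at hy
    norm_num at hy
  obtain ⟨u, hu1, hu2, hxu⟩ := exists_invol_pow hx
  obtain ⟨v, hv1, hv2, hyv⟩ := exists_invol_pow hy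
  obtain ⟨p1, hlen⟩ := walk3 (i := i) (j := j) hu1 hu2 hv1 hv2 hi1 hi2 hj1 hj2 hij
  by_cases hxeq : x = u
  · subst hxeq
    by_cases hyeq : v = y
    · subst hyeq
      exact ⟨p1, by omega⟩
    · refine ⟨p1.append
        (SimpleGraph.Walk.cons (show (commGraph G).Adj _ _ from ⟨hyeq, hv1, hy1, hyv.symm⟩) SimpleGraph.Walk.nil), ?_⟩
      simp only [SimpleGraph.Walk.length_append, SimpleGraph.Walk.length_cons,
        SimpleGraph.Walk.length_nil]
      omega
  · have hadj : (commGraph G).Adj x u := ⟨hxeq, hx1, hu1, hxu⟩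
    by_cases hyeq : v = y
    · subst hyeq
      refine ⟨SimpleGraph.Walk.cons hadj p1, ?_⟩
      simp only [SimpleGraph.Walk.length_cons]
      omega
    · refine ⟨SimpleGraph.Walk.cons hadj (p1.append
        (SimpleGraph.Walk.cons (show (commGraph G).Adj _ _ from ⟨hyeq, hv1, hy1, hyv.symm⟩) SimpleGraph.Walk.nil)), ?_⟩
      simp only [SimpleGraph.Walk.length_cons, SimpleGraph.Walk.length_append,
        SimpleGraph.Walk.length_nil]
      omega
end

section
/- Let G be a finite group, p a prime, K a normal subgroup of G, a a non-identity element, and x ∈ G \ K. Set G₀ = ⟨x⟩K. Suppose f ∈ C_{G₀}(a) is a nontrivial p-element, that some element x_p ∈ ⟨x⟩ ∩ K has order p, and that C_K(x_p) is cyclic. Then the distance in the commuting graph of G from x to the G-conjugacy class of a is at most 3. -/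
lemma aux_mem_zpowers {C : Type*} [Group C] [Fintype C] (hc : IsCyclic C) {p : ℕ}
    (hp : p.Prime) {u v : C} (hu : orderOf u = p) (hv : v ^ p = 1) :
    v ∈ Subgroup.zpowers u := by
  classical
  have hT : (Finset.univ.filter fun z : C => z ^ p = 1).card ≤ p :=
    hc.card_pow_eq_one_le hp.pos
  set U : Finset C := Finset.univ.filter (fun z => z ∈ Subgroup.zpowers u) with hU
  have hUsub : U ⊆ Finset.univ.filter fun z : C => z ^ p = 1 := by
    intro z hz
    simp only [hU, Finset.mem_filter, Finset.mem_univ, true_and] at hz ⊢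
    obtain ⟨k, rfl⟩ := hz
    rw [← zpow_natCast, ← zpow_mul, mul_comm, zpow_mul, zpow_natCast, ← hu,
      pow_orderOf_eq_one, one_zpow]
  have hUcard : U.card = p := by
    have h1 : U.card = Fintype.card {z : C // z ∈ Subgroup.zpowers u} :=
      (Fintype.card_subtype _).symm
    have h2 : Fintype.card {z : C // z ∈ Subgroup.zpowers u} = orderOf u := by
      rw [← Fintype.card_zpowers]
    rw [h1, h2, hu]
  have heq : U = Finset.univ.filter fun z : C => z ^ p = 1 :=
    Finset.eq_of_subset_of_card_le hUsub (by rw [hUcard]; exact hT)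
  have : v ∈ U := by rw [heq]; simp [hv]
  simpa [hU, Finset.mem_filter] using this

lemma aux_conj_eq {G : Type*} [Group G] {p : ℕ} (hp : p.Prime) {y xp : G} {k : ℤ}
    (hxpo : orderOf xp = p) (hN : ∃ m : ℕ, y ^ p ^ m = 1)
    (hconj : y * xp * y⁻¹ = xp ^ k) : Commute y xp := by
  haveI : Fact p.Prime := ⟨hp⟩
  obtain ⟨m, hm⟩ := hN
  have hxp1 : xp ≠ 1 := by
    intro h; rw [h, orderOf_one] at hxpo; exact hp.one_lt.ne' hxpo.symm
  set φ : MulAut G := MulAut.conj y with hφ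
  have hφxp : φ xp = xp ^ k := by simpa [hφ, MulAut.conj_apply] using hconj
  have hind : ∀ n : ℕ, (φ ^ n) xp = xp ^ (k ^ n) := by
    intro n
    induction n with
    | zero => simp
    | succ n ih =>
      rw [pow_succ', MulAut.mul_apply, ih, map_zpow, hφxp, ← zpow_mul, pow_succ]
      congr 1
      ring
  have hφN : φ ^ p ^ m = 1 := by
    rw [hφ, ← MonoidHom.map_pow MulAut.conj y, hm, map_one]
  have hfix : xp = xp ^ (k ^ (p ^ m)) := by
    have := hind (p ^ m); rwa [hφN, MulAut.one_apply] at this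
  -- pass to ZMod p
  have hdvd : (p : ℤ) ∣ k ^ (p ^ m) - 1 := by
    have h1 : xp ^ (k ^ (p ^ m) - 1) = 1 := by
      rw [zpow_sub, zpow_one, ← hfix]
      simp
    have h2 := orderOf_dvd_iff_zpow_eq_one.mpr h1
    rwa [hxpo] at h2
  have hκN : (k : ZMod p) ^ (p ^ m) = 1 := by
    have : ((k ^ (p ^ m) - 1 : ℤ) : ZMod p) = 0 :=
      (ZMod.intCast_zmod_eq_zero_iff_dvd _ p).mpr hdvd
    push_cast at this
    linear_combination this
  have hκ0 : (k : ZMod p) ≠ 0 := by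
    intro h0
    have : (p : ℤ) ∣ k := (ZMod.intCast_zmod_eq_zero_iff_dvd _ p).mp h0
    have hxpk : xp ^ k = 1 := by
      rw [← hxpo] at this; exact orderOf_dvd_iff_zpow_eq_one.mp this
    rw [hxpk] at hconj
    apply hxp1
    have h := congrArg (fun t => y⁻¹ * t * y) hconj
    simpa [mul_assoc] using h
  have hκp1 : (k : ZMod p) ^ (p - 1) = 1 := ZMod.pow_card_sub_one_eq_one hκ0
  have hd1 : orderOf (k : ZMod p) ∣ p ^ m := orderOf_dvd_of_pow_eq_one hκN
  have hd2 : orderOf (k : ZMod p) ∣ p - 1 := orderOf_dvd_of_pow_eq_one hκp1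
  have hcop : Nat.Coprime (p ^ m) (p - 1) := by
    apply Nat.Coprime.pow_left
    have h2 := hp.two_le
    exact (hp.coprime_iff_not_dvd).mpr (Nat.not_dvd_of_pos_of_lt (by omega) (by omega))
  have hord1 : orderOf (k : ZMod p) = 1 :=
    Nat.eq_one_of_dvd_one (hcop ▸ Nat.dvd_gcd hd1 hd2)
  have hκ1 : (k : ZMod p) = 1 := orderOf_eq_one_iff.mp hord1
  have hk1 : (p : ℤ) ∣ k - 1 := by
    have : ((k - 1 : ℤ) : ZMod p) = 0 := by push_cast; rw [hκ1]; ring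
    exact (ZMod.intCast_zmod_eq_zero_iff_dvd _ p).mp this
  have hxpk : xp ^ k = xp := by
    rw [← hxpo] at hk1
    have := orderOf_dvd_iff_zpow_eq_one.mp hk1
    rw [zpow_sub, zpow_one, mul_inv_eq_one] at this
    exact this
  rw [hxpk] at hconj
  have h := congrArg (fun t => t * y) hconj
  exact (show y * xp = xp * y by simpa [mul_assoc] using h)

lemma aux_central {G : Type*} [Group G] [Fintype G] {p : ℕ} (hp : p.Prime)
    {K : Subgroup G} (hK : K.Normal) {xp : G} (hxpK : xp ∈ K) (hxpo : orderOf xp = p)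
    (hcyc : IsCyclic ↥(Subgroup.centralizer {xp} ⊓ K)) (P : Sylow p G)
    (hxpP : xp ∈ (P : Subgroup G)) : ∀ y ∈ (P : Subgroup G), Commute y xp := by
  haveI : Fact p.Prime := ⟨hp⟩
  set R : Subgroup ↥(P : Subgroup G) :=
    (Subgroup.centralizer {xp}).subgroupOf (P : Subgroup G) with hR
  have hmemR : ∀ z : ↥(P : Subgroup G), z ∈ R ↔ Commute (z : G) xp := by
    intro z
    rw [hR, Subgroup.mem_subgroupOf, Subgroup.mem_centralizer_singleton_iff]
    exact ⟨fun h => h, fun h => h⟩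
  have hxpR : (⟨xp, hxpP⟩ : ↥(P : Subgroup G)) ∈ R := (hmemR _).mpr (Commute.refl xp)
  have hxpp : xp ^ p = 1 := by rw [← hxpo]; exact pow_orderOf_eq_one xp
  have hRtop : R = ⊤ := by
    by_contra hne
    haveI : Group.IsNilpotent ↥(P : Subgroup G) := P.isPGroup'.isNilpotent
    have hlt : R < Subgroup.normalizer (R : Set ↥(P : Subgroup G)) :=
      normalizerCondition_of_isNilpotent R (lt_top_iff_ne_top.mpr hne)
    obtain ⟨y, hyN, hyR⟩ := SetLike.exists_of_lt hlt
    have hconjR : y * (⟨xp, hxpP⟩ : ↥(P : Subgroup G)) * y⁻¹ ∈ R :=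
      (Subgroup.mem_normalizer_iff.mp hyN _).mp hxpR
    set z : G := (y : G) * xp * (y : G)⁻¹ with hz
    have hzC : z ∈ Subgroup.centralizer {xp} := by
      have h := (hmemR _).mp hconjR
      rw [Subgroup.mem_centralizer_singleton_iff]
      simpa [hz] using h.eq
    have hzK : z ∈ K := hK.conj_mem xp hxpK (y : G)
    set M : Subgroup G := Subgroup.centralizer {xp} ⊓ K with hM
    haveI : Fintype ↥M := Fintype.ofFinite _
    have hzM : z ∈ M := ⟨hzC, hzK⟩
    have hxpM : xp ∈ M := ⟨Subgroup.mem_centralizer_singleton_iff.mpr rfl, hxpK⟩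
    have huo : orderOf (⟨xp, hxpM⟩ : ↥M) = p := by rw [Subgroup.orderOf_mk, hxpo]
    have hvp : (⟨z, hzM⟩ : ↥M) ^ p = 1 := by
      ext
      push_cast
      rw [hz, conj_pow, hxpp]
      group
    have hmem := aux_mem_zpowers hcyc hp huo hvp
    obtain ⟨k, hk⟩ := hmem
    have hkG : (y : G) * xp * (y : G)⁻¹ = xp ^ k := by
      have := congrArg (Subtype.val) hk
      push_cast at this
      exact this.symm
    have hNy : ∃ m : ℕ, (y : G) ^ p ^ m = 1 := by
      obtain ⟨m, hm⟩ := P.isPGroup' y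
      exact ⟨m, by
        have := congrArg (Subtype.val) hm
        push_cast at this
        exact this⟩
    have hcomm := aux_conj_eq hp hxpo hNy hkG
    exact hyR ((hmemR y).mpr hcomm)
  intro w hw
  have : (⟨w, hw⟩ : ↥(P : Subgroup G)) ∈ R := hRtop ▸ Subgroup.mem_top _
  exact (hmemR _).mp this

open Pointwise in
theorem stmt7 {G : Type*} [Group G] [Fintype G] (hZ : Subgroup.center G = ⊥)
    (p : ℕ) (hp : p.Prime) (K : Subgroup G) (hK : K.Normal)
    (a : G) (ha : a ≠ 1) (x : G) (hxK : x ∉ K)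
    (f : G) (hfG0 : f ∈ Subgroup.zpowers x ⊔ K) (hfa : Commute f a)
    (hf1 : f ≠ 1) (hfp : ∃ n : ℕ, orderOf f = p ^ n)
    (xp : G) (hxp : xp ∈ Subgroup.zpowers x) (hxpK : xp ∈ K) (hxpo : orderOf xp = p)
    (hcyc : IsCyclic ↥(Subgroup.centralizer {xp} ⊓ K)) :
    ∃ g : G, ∃ w : (commGraph G).Walk x (g⁻¹ * a * g), w.length ≤ 3 := by
  classical
  haveI : Fact p.Prime := ⟨hp⟩
  have hxp1 : xp ≠ 1 := by
    intro h; rw [h, orderOf_one] at hxpo; exact hp.one_lt.ne' hxpo.symm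
  have hx1 : x ≠ 1 := fun h => hxK (h ▸ K.one_mem)
  have hxxp' : x ≠ xp := fun h => hxK (h ▸ hxpK)
  have hxxp : Commute x xp := by
    obtain ⟨k, hk⟩ := hxp
    rw [← hk]
    exact (Commute.refl x).zpow_right k
  -- Sylow subgroup containing xp
  have hPGxp : IsPGroup p (Subgroup.zpowers xp) :=
    IsPGroup.of_card (by rw [Nat.card_zpowers, hxpo, pow_one])
  obtain ⟨P, hPle⟩ := hPGxp.exists_le_sylow
  have hxpP : xp ∈ (P : Subgroup G) := hPle (Subgroup.mem_zpowers xp)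
  have hcent := aux_central hp hK hxpK hxpo hcyc P hxpP
  -- Sylow subgroup containing f, conjugate it into P
  obtain ⟨n, hn⟩ := hfp
  have hPGf : IsPGroup p (Subgroup.zpowers f) :=
    IsPGroup.of_card (by rw [Nat.card_zpowers, hn])
  obtain ⟨Q, hQle⟩ := hPGf.exists_le_sylow
  obtain ⟨g, hg⟩ := MulAction.exists_smul_eq G Q P
  have hfQ : f ∈ (Q : Subgroup G) := hQle (Subgroup.mem_zpowers f)
  have hfP : g * f * g⁻¹ ∈ (P : Subgroup G) := by
    have h1 : (MulAut.conj g) • f ∈ (MulAut.conj g) • (Q : Subgroup G) :=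
      Subgroup.smul_mem_pointwise_smul f (MulAut.conj g) Q hfQ
    rw [← Sylow.coe_subgroup_smul, hg] at h1
    simpa [MulAut.conj_apply] using h1
  have hcfxp : Commute (g * f * g⁻¹) xp := hcent _ hfP
  have hcfa : Commute (g * f * g⁻¹) (g * a * g⁻¹) := by
    have := hfa.map (MulAut.conj g).toMonoidHom
    simpa [MulAut.conj_apply] using this
  have hf'1 : g * f * g⁻¹ ≠ 1 := by
    intro h
    apply hf1
    have := congrArg (fun t => g⁻¹ * t * g) h
    simpa [mul_assoc] using this
  have ha'1 : g * a * g⁻¹ ≠ 1 := by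
    intro h
    apply ha
    have := congrArg (fun t => g⁻¹ * t * g) h
    simpa [mul_assoc] using this
  refine ⟨g⁻¹, ?_⟩
  rw [inv_inv]
  by_cases hxa : x = g * a * g⁻¹
  · refine ⟨SimpleGraph.Walk.nil.copy rfl hxa, ?_⟩
    rw [SimpleGraph.Walk.length_copy]
    simp
  by_cases hxpa : xp = g * a * g⁻¹
  · have hadj : (commGraph G).Adj x (g * a * g⁻¹) := ⟨hxa, hx1, ha'1, (hxpa ▸ hxxp).eq⟩
    exact ⟨SimpleGraph.Walk.cons hadj SimpleGraph.Walk.nil,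
      by norm_num [SimpleGraph.Walk.length_cons]⟩
  by_cases hmid : xp = g * f * g⁻¹ ∨ g * f * g⁻¹ = g * a * g⁻¹
  · have hcxpa : Commute xp (g * a * g⁻¹) := by
      rcases hmid with h | h
      · rw [h]; exact hcfa
      · rw [← h]; exact hcfxp.symm
    refine ⟨SimpleGraph.Walk.cons ⟨hxxp', hx1, hxp1, hxxp.eq⟩
      (SimpleGraph.Walk.cons ⟨hxpa, hxp1, ha'1, hcxpa.eq⟩ SimpleGraph.Walk.nil), by exact Nat.le_of_ble_eq_true rfl⟩
  push_neg at hmid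
  obtain ⟨hmid1, hmid2⟩ := hmid
  exact ⟨SimpleGraph.Walk.cons ⟨hxxp', hx1, hxp1, hxxp.eq⟩
    (SimpleGraph.Walk.cons ⟨hmid1, hxp1, hf'1, hcfxp.symm.eq⟩
      (SimpleGraph.Walk.cons ⟨hmid2, hf'1, ha'1, hcfa.eq⟩ SimpleGraph.Walk.nil)), by exact Nat.le_of_ble_eq_true rfl⟩
end

section
/- Let G be a finite group with trivial centre. The map Ψ ↦ π(Ψ) induces a bijection between the set of G-conjugacy classes of connected components of the commuting graph Γ(G) and the set of connected components of the prime graph π(G). In particular, Γ(G) is connected if and only if π(G) is connected. -/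
/-- The prime graph of a finite group: primes `r ≠ s` are adjacent iff the group
has an element of order `r * s`. -/
def primeGraph (G : Type*) [Group G] [Fintype G] : SimpleGraph ℕ where
  Adj r s := r ≠ s ∧ r.Prime ∧ s.Prime ∧ ∃ g : G, orderOf g = r * s
  symm := ⟨by
    rintro r s ⟨h1, h2, h3, g, hg⟩
    exact ⟨h1.symm, h3, h2, g, by rw [Nat.mul_comm]; exact hg⟩⟩
  loopless := ⟨by rintro r ⟨h, -⟩; exact h rfl⟩

open scoped Pointwise
set_option linter.unusedSectionVars false

section Helpers

variable {G : Type*} [Group G] [Fintype G]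

/-- Conjugation as a graph homomorphism of the commuting graph. -/
def st9conjHom (g : G) : commGraph G →g commGraph G where
  toFun x := g⁻¹ * x * g
  map_rel' := by
    rintro x y ⟨h1, h2, h3, h4⟩
    refine ⟨fun h => h1 ?_, fun h => h2 ?_, fun h => h3 ?_, ?_⟩
    · have := congrArg (fun t => g * t * g⁻¹) h
      simpa [mul_assoc] using this
    · have := congrArg (fun t => g * t * g⁻¹) h
      simpa [mul_assoc] using this
    · have := congrArg (fun t => g * t * g⁻¹) h
      simpa [mul_assoc] using this
    · have : g⁻¹ * (x * y) * g = g⁻¹ * (y * x) * g := by rw [h4]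
      calc g⁻¹ * x * g * (g⁻¹ * y * g) = g⁻¹ * (x * y) * g := by group
        _ = g⁻¹ * (y * x) * g := this
        _ = g⁻¹ * y * g * (g⁻¹ * x * g) := by group

lemma st9_reach_conj (g : G) {x y : G} (h : (commGraph G).Reachable x y) :
    (commGraph G).Reachable (g⁻¹ * x * g) (g⁻¹ * y * g) :=
  h.map (st9conjHom g)

lemma st9_reach_of_commute {x y : G} (hx : x ≠ 1) (hy : y ≠ 1) (h : Commute x y) :
    (commGraph G).Reachable x y := by
  rcases eq_or_ne x y with rfl | hne
  · exact SimpleGraph.Reachable.refl x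
  · exact SimpleGraph.Adj.reachable ⟨hne, hx, hy, h⟩

lemma st9_orderOf_ne_one {x : G} (hx : x ≠ 1) : orderOf x ≠ 1 := by
  simpa [orderOf_eq_one_iff] using hx

lemma st9_pow_div_order {z : G} {r : ℕ} (h : r ∣ orderOf z) :
    orderOf (z ^ (orderOf z / r)) = r :=
  orderOf_pow_orderOf_div (orderOf_pos z).ne' h

lemma st9_ne_one_of_order {u : G} {r : ℕ} (hr : r.Prime) (hu : orderOf u = r) : u ≠ 1 := by
  intro h
  rw [h, orderOf_one] at hu
  exact hr.one_lt.ne' hu.symm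

/-- Primes dividing orders of two commuting nontrivial elements are connected
in the prime graph. -/
lemma st9_preach_of_commute {x y : G} {p q : ℕ} (hp : p.Prime) (hq : q.Prime)
    (hc : Commute x y) (hpx : p ∣ orderOf x) (hqy : q ∣ orderOf y) :
    (primeGraph G).Reachable p q := by
  rcases eq_or_ne p q with rfl | hne
  · exact SimpleGraph.Reachable.refl p
  · set a := x ^ (orderOf x / p) with ha
    set b := y ^ (orderOf y / q) with hb
    have hoa : orderOf a = p := st9_pow_div_order hpx
    have hob : orderOf b = q := st9_pow_div_order hqy
    have hab : Commute a b := (hc.pow_pow _ _)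
    refine SimpleGraph.Adj.reachable ⟨hne, hp, hq, a * b, ?_⟩
    rw [hab.orderOf_mul_eq_mul_orderOf_of_coprime
      (by rw [hoa, hob]; exact (Nat.coprime_primes hp hq).mpr hne), hoa, hob]

/-- Along a walk in the commuting graph, primes stay connected in the prime graph. -/
lemma st9_forward {x z : G} (w : (commGraph G).Walk x z) :
    ∀ p q : ℕ, p.Prime → q.Prime → p ∣ orderOf x → q ∣ orderOf z →
      (primeGraph G).Reachable p q := by
  induction w with
  | nil =>
      intro p q hp hq hpx hqz
      exact st9_preach_of_commute hp hq (Commute.refl _) hpx hqz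
  | cons hadj w ih =>
      intro p q hp hq hpx hqz
      obtain ⟨-, -, hy, hcomm⟩ := hadj
      obtain ⟨r, hr, hry⟩ := Nat.exists_prime_and_dvd (st9_orderOf_ne_one hy)
      exact (st9_preach_of_commute hp hr hcomm hpx hry).trans (ih r q hr hq hry hqz)

/-- Nontrivial elements of a Sylow subgroup are connected in the commuting graph. -/
lemma st9_sylow_reach {r : ℕ} [Fact r.Prime] (P : Sylow r G) {u v : G}
    (hu : u ∈ (P : Subgroup G)) (hv : v ∈ (P : Subgroup G)) (hu1 : u ≠ 1) (hv1 : v ≠ 1) :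
    (commGraph G).Reachable u v := by
  haveI : Nontrivial (P : Subgroup G) :=
    ⟨⟨⟨u, hu⟩, 1, by simp [Subtype.ext_iff, hu1]⟩⟩
  haveI := IsPGroup.center_nontrivial (G := (P : Subgroup G)) P.2
  obtain ⟨c, hc⟩ := exists_ne (1 : Subgroup.center (P : Subgroup G))
  set c' : G := ((c : (P : Subgroup G)) : G) with hc'
  have hc1 : c' ≠ 1 := by
    rw [hc']
    simp only [ne_eq, OneMemClass.coe_eq_one]
    exact hc
  have hcomm : ∀ w : G, w ∈ (P : Subgroup G) → Commute c' w := by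
    intro w hw
    have := (Subgroup.mem_center_iff.mp c.2 ⟨w, hw⟩)
    exact congrArg (Subtype.val) this.symm
  exact (st9_reach_of_commute hu1 hc1 ((hcomm u hu).symm)).trans
    (st9_reach_of_commute hc1 hv1 (hcomm v hv))

lemma st9_zpowers_pgroup {u : G} {r : ℕ} (hu : orderOf u = r) :
    IsPGroup r (Subgroup.zpowers u) := by
  intro g
  refine ⟨1, ?_⟩
  have h1 : orderOf (g : G) ∣ r := hu ▸ orderOf_dvd_of_mem_zpowers g.2
  have h2 : (g : G) ^ r = 1 := orderOf_dvd_iff_pow_eq_one.mp h1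
  ext
  simpa using h2

/-- Two elements of the same prime order lie in conjugate components. -/
lemma st9_conj_reach_of_same_prime {r : ℕ} (hr : r.Prime) {u v : G}
    (hu : orderOf u = r) (hv : orderOf v = r) :
    ∃ g : G, (commGraph G).Reachable (g⁻¹ * u * g) v := by
  haveI := Fact.mk hr
  obtain ⟨P, hP⟩ := (st9_zpowers_pgroup hu).exists_le_sylow
  obtain ⟨Q, hQ⟩ := (st9_zpowers_pgroup hv).exists_le_sylow
  obtain ⟨g, hg⟩ := MulAction.exists_smul_eq G P Q
  have huQ : g * u * g⁻¹ ∈ (Q : Subgroup G) := by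
    rw [← hg]
    have : u ∈ (P : Set G) := hP (Subgroup.mem_zpowers u)
    have h2 : (MulAut.conj g) • u ∈ MulAut.conj g • (P : Set G) :=
      Set.smul_mem_smul_set this
    rw [← Sylow.coe_smul] at h2
    exact (by simpa [MulAut.smul_def] using h2 : g * u * g⁻¹ ∈ g • P)
  have hu1 : u ≠ 1 := st9_ne_one_of_order hr hu
  have hv1 : v ≠ 1 := st9_ne_one_of_order hr hv
  have hgu1 : g * u * g⁻¹ ≠ 1 := by
    intro h
    apply hu1
    have := congrArg (fun t => g⁻¹ * t * g) h
    simpa [mul_assoc] using this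
  refine ⟨g⁻¹, ?_⟩
  have : (g⁻¹)⁻¹ * u * g⁻¹ = g * u * g⁻¹ := by rw [inv_inv]
  rw [this]
  exact st9_sylow_reach Q huQ (hQ (Subgroup.mem_zpowers v)) hgu1 hv1

lemma st9_orderOf_conj (h b : G) : orderOf (h * b * h⁻¹) = orderOf b := by
  have := orderOf_injective (MulAut.conj h).toMonoidHom (MulAut.conj h).injective b
  simpa using this

/-- One step of adjacency in the prime graph, realized inside a fixed component. -/
lemma st9_step {x z : G} {r s : ℕ} (hxz : (commGraph G).Reachable x z)
    (hrz : r ∣ orderOf z) (hadj : (primeGraph G).Adj r s) :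
    ∃ z', (commGraph G).Reachable x z' ∧ s ∣ orderOf z' := by
  obtain ⟨hrs, hr, hs, g, hg⟩ := hadj
  have hz1 : z ≠ 1 := by
    intro h
    rw [h, orderOf_one, Nat.dvd_one] at hrz
    exact hr.one_lt.ne' hrz
  set w := z ^ (orderOf z / r) with hwdef
  have hw : orderOf w = r := st9_pow_div_order hrz
  have hw1 : w ≠ 1 := st9_ne_one_of_order hr hw
  have hxw : (commGraph G).Reachable x w :=
    hxz.trans (st9_reach_of_commute hz1 hw1 ((Commute.refl z).pow_right _))
  set a := g ^ s with hadef
  set b := g ^ r with hbdef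
  have ha : orderOf a = r := by
    rw [hadef, orderOf_pow, hg, Nat.gcd_eq_right (dvd_mul_left s r),
      Nat.mul_div_cancel _ hs.pos]
  have hb : orderOf b = s := by
    rw [hbdef, orderOf_pow, hg, Nat.gcd_eq_right (dvd_mul_right r s),
      Nat.mul_div_cancel_left _ hr.pos]
  have ha1 : a ≠ 1 := st9_ne_one_of_order hr ha
  have hb1 : b ≠ 1 := st9_ne_one_of_order hs hb
  have hab : Commute a b := (Commute.refl g).pow_pow s r
  obtain ⟨h, hh⟩ := st9_conj_reach_of_same_prime hr hw ha
  have h2 : (commGraph G).Reachable (h⁻¹ * w * h) b :=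
    hh.trans (st9_reach_of_commute ha1 hb1 hab)
  have h3 := st9_reach_conj h⁻¹ h2
  have e1 : (h⁻¹)⁻¹ * (h⁻¹ * w * h) * h⁻¹ = w := by group
  have e2 : (h⁻¹)⁻¹ * b * h⁻¹ = h * b * h⁻¹ := by rw [inv_inv]
  rw [e1, e2] at h3
  exact ⟨h * b * h⁻¹, hxw.trans h3, by rw [st9_orderOf_conj]; exact hb ▸ dvd_refl s⟩

/-- Walking in the prime graph, staying inside the component of `x`. -/
lemma st9_backward {x : G} {p q : ℕ} (w : (primeGraph G).Walk p q) :
    ∀ z : G, (commGraph G).Reachable x z → p ∣ orderOf z →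
      ∃ z', (commGraph G).Reachable x z' ∧ q ∣ orderOf z' := by
  induction w with
  | nil => exact fun z hz hp => ⟨z, hz, hp⟩
  | cons hadj w ih =>
      intro z hz hpz
      obtain ⟨z', hz', hpz'⟩ := st9_step hz hpz hadj
      exact ih z' hz' hpz'

end Helpers

theorem stmt9 {G : Type*} [Group G] [Fintype G] (hZ : Subgroup.center G = ⊥) :
    -- the map Ψ ↦ π(Ψ) is surjective onto components of the prime graph
    (∀ p : ℕ, p.Prime → p ∣ Fintype.card G →
      ∃ x : G, x ≠ 1 ∧ ∀ q : ℕ, q.Prime →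
        ((∃ z : G, (commGraph G).Reachable x z ∧ q ∣ orderOf z) ↔
          (primeGraph G).Reachable p q)) ∧
    -- the map is injective on G-classes of components: equal prime sets force conjugacy
    (∀ x y : G, x ≠ 1 → y ≠ 1 →
      {p : ℕ | p.Prime ∧ ∃ z : G, (commGraph G).Reachable x z ∧ p ∣ orderOf z} =
        {p : ℕ | p.Prime ∧ ∃ z : G, (commGraph G).Reachable y z ∧ p ∣ orderOf z} →
      ∃ g : G, (commGraph G).Reachable (g⁻¹ * x * g) y) ∧
    -- in particular, the commuting graph is connected iff the prime graph is connected
    ((∀ x y : G, x ≠ 1 → y ≠ 1 → (commGraph G).Reachable x y) ↔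
      (∀ p q : ℕ, p.Prime → q.Prime → p ∣ Fintype.card G → q ∣ Fintype.card G →
        (primeGraph G).Reachable p q)) := by
  have key2 : ∀ x y : G, x ≠ 1 → y ≠ 1 →
      (∃ p : ℕ, p.Prime ∧ (∃ z : G, (commGraph G).Reachable x z ∧ p ∣ orderOf z) ∧
        (∃ z : G, (commGraph G).Reachable y z ∧ p ∣ orderOf z)) →
      ∃ g : G, (commGraph G).Reachable (g⁻¹ * x * g) y := by
    intro x y hx hy ⟨p, hp, ⟨z1, hz1, hpz1⟩, ⟨z2, hz2, hpz2⟩⟩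
    have hz11 : z1 ≠ 1 := by
      intro h; rw [h, orderOf_one, Nat.dvd_one] at hpz1; exact hp.one_lt.ne' hpz1
    have hz21 : z2 ≠ 1 := by
      intro h; rw [h, orderOf_one, Nat.dvd_one] at hpz2; exact hp.one_lt.ne' hpz2
    set u := z1 ^ (orderOf z1 / p) with hu
    set v := z2 ^ (orderOf z2 / p) with hv
    have hou : orderOf u = p := st9_pow_div_order hpz1
    have hov : orderOf v = p := st9_pow_div_order hpz2
    have hu1 : u ≠ 1 := st9_ne_one_of_order hp hou
    have hv1 : v ≠ 1 := st9_ne_one_of_order hp hov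
    have hxu : (commGraph G).Reachable x u :=
      hz1.trans (st9_reach_of_commute hz11 hu1 ((Commute.refl z1).pow_right _))
    have hyv : (commGraph G).Reachable y v :=
      hz2.trans (st9_reach_of_commute hz21 hv1 ((Commute.refl z2).pow_right _))
    obtain ⟨g, hg⟩ := st9_conj_reach_of_same_prime hp hou hov
    exact ⟨g, (st9_reach_conj g hxu).trans (hg.trans hyv.symm)⟩
  refine ⟨?_, ?_, ?_, ?_⟩
  · -- surjectivity
    intro p hp hpcard
    haveI := Fact.mk hp
    obtain ⟨x, hx⟩ := exists_prime_orderOf_dvd_card p hpcard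
    refine ⟨x, st9_ne_one_of_order hp hx, fun q hq => ⟨?_, ?_⟩⟩
    · rintro ⟨z, hz, hqz⟩
      obtain ⟨w⟩ := hz
      exact st9_forward w p q hp hq (hx ▸ dvd_refl p) hqz
    · intro hpq
      obtain ⟨w⟩ := hpq
      exact st9_backward w x (SimpleGraph.Reachable.refl x) (hx ▸ dvd_refl p)
  · -- injectivity on classes
    intro x y hx hy hset
    obtain ⟨p, hp, hpx⟩ := Nat.exists_prime_and_dvd (st9_orderOf_ne_one hx)
    have hmem : p ∈ {p : ℕ | p.Prime ∧ ∃ z : G, (commGraph G).Reachable x z ∧ p ∣ orderOf z} :=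
      ⟨hp, x, SimpleGraph.Reachable.refl x, hpx⟩
    rw [hset] at hmem
    obtain ⟨-, z2, hz2, hpz2⟩ := hmem
    exact key2 x y hx hy ⟨p, hp, ⟨x, SimpleGraph.Reachable.refl x, hpx⟩, ⟨z2, hz2, hpz2⟩⟩
  · -- Γ connected → π connected
    intro hcon p q hp hq hpcard hqcard
    haveI := Fact.mk hp
    haveI := Fact.mk hq
    obtain ⟨x, hx⟩ := exists_prime_orderOf_dvd_card p hpcard
    obtain ⟨y, hy⟩ := exists_prime_orderOf_dvd_card q hqcard
    obtain ⟨w⟩ := hcon x y (st9_ne_one_of_order hp hx) (st9_ne_one_of_order hq hy)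
    exact st9_forward w p q hp hq (hx ▸ dvd_refl p) (hy ▸ dvd_refl q)
  · -- π connected → Γ connected
    intro hcon x y hx hy
    obtain ⟨p, hp, hpx⟩ := Nat.exists_prime_and_dvd (st9_orderOf_ne_one hx)
    obtain ⟨q, hq, hqy⟩ := Nat.exists_prime_and_dvd (st9_orderOf_ne_one hy)
    have hpcard : p ∣ Fintype.card G := hpx.trans (orderOf_dvd_card)
    have hqcard : q ∣ Fintype.card G := hqy.trans (orderOf_dvd_card)
    -- the stabilizer of the component of x is all of G
    set N : Subgroup G :=
      { carrier := {g : G | (commGraph G).Reachable x (g⁻¹ * x * g)}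
        one_mem' := by simpa using SimpleGraph.Reachable.refl x
        mul_mem' := by
          intro a b ha hb
          show (commGraph G).Reachable x ((a * b)⁻¹ * x * (a * b))
          have h2 : (commGraph G).Reachable x (b⁻¹ * (a⁻¹ * x * a) * b) :=
            hb.trans (st9_reach_conj b ha)
          have e : (a * b)⁻¹ * x * (a * b) = b⁻¹ * (a⁻¹ * x * a) * b := by group
          rw [e]; exact h2
        inv_mem' := by
          intro a ha
          show (commGraph G).Reachable x ((a⁻¹)⁻¹ * x * a⁻¹)
          have h1 := st9_reach_conj a⁻¹ ha
          have e1 : (a⁻¹)⁻¹ * (a⁻¹ * x * a) * a⁻¹ = x := by group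
          rw [e1] at h1
          exact h1.symm } with hNdef
    have hNtop : N = ⊤ := by
      rw [← Subgroup.index_eq_one]
      by_contra hne
      obtain ⟨r, hr, hrN⟩ := Nat.exists_prime_and_dvd hne
      haveI := Fact.mk hr
      have hrG : r ∣ Fintype.card G := by
        have := Subgroup.index_dvd_card (G := G) (H := N)
        rw [Nat.card_eq_fintype_card] at this
        exact hrN.trans this
      -- find an element of order r in the component of x
      obtain ⟨wpr⟩ := hcon p r hp hr hpcard hrG
      obtain ⟨z, hz, hrz⟩ := st9_backward wpr x (SimpleGraph.Reachable.refl x) hpx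
      have hz1 : z ≠ 1 := by
        intro h; rw [h, orderOf_one, Nat.dvd_one] at hrz; exact hr.one_lt.ne' hrz
      set u := z ^ (orderOf z / r) with hu
      have hou : orderOf u = r := st9_pow_div_order hrz
      have hu1 : u ≠ 1 := st9_ne_one_of_order hr hou
      have hxu : (commGraph G).Reachable x u :=
        hz.trans (st9_reach_of_commute hz1 hu1 ((Commute.refl z).pow_right _))
      obtain ⟨P, hP⟩ := (st9_zpowers_pgroup hou).exists_le_sylow
      have hPN : (P : Subgroup G) ≤ N := by
        intro g hg
        rcases eq_or_ne g 1 with rfl | hg1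
        · exact N.one_mem
        · have h1 : (commGraph G).Reachable x g :=
            hxu.trans (st9_sylow_reach P (hP (Subgroup.mem_zpowers u)) hg hu1 hg1)
          have h2 := st9_reach_conj g h1
          have e : g⁻¹ * g * g = g := by group
          rw [e] at h2
          exact h1.trans h2.symm
      have hdvd : N.index ∣ Subgroup.index (P : Subgroup G) :=
        Subgroup.index_dvd_of_le hPN
      have hrel : Subgroup.relIndex (P : Subgroup G) (Subgroup.normalizer ((P : Subgroup G) : Set G)) ≠ 0 := by
        rw [Subgroup.relIndex]
        exact Subgroup.index_ne_zero_of_finite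
      exact (P.not_dvd_index' hrel) (hrN.trans hdvd)
    -- conjugate the component of y onto the component of x
    obtain ⟨wpq⟩ := hcon p q hp hq hpcard hqcard
    obtain ⟨z, hz, hqz⟩ := st9_backward wpq x (SimpleGraph.Reachable.refl x) hpx
    have hgy : ∃ g : G, (commGraph G).Reachable (g⁻¹ * x * g) y :=
      key2 x y hx hy ⟨q, hq, ⟨z, hz, hqz⟩, ⟨y, SimpleGraph.Reachable.refl y, hqy⟩⟩
    obtain ⟨g, hg⟩ := hgy
    have hgN : g ∈ N := hNtop ▸ Subgroup.mem_top g
    exact (hgN : (commGraph G).Reachable x (g⁻¹ * x * g)).trans hg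
end

section
/- Let G be a finite group with trivial centre, Ψ a connected component of the commuting graph Γ(G), and M = Stab_G(Ψ) the setwise stabilizer of Ψ under the conjugation action. Then either M = G, or for every prime p ∈ π(Ψ), M is a strongly p-embedded subgroup of G. -/
section Aux

variable {G : Type*} [Group G]

/-- Conjugation as a graph homomorphism of the commuting graph. -/
def conjGraphHom (g : G) : commGraph G →g commGraph G where
  toFun a := g⁻¹ * a * g
  map_rel' := by
    rintro a b ⟨h1, h2, h3, h4⟩
    have key : ∀ c : G, g⁻¹ * c * g = 1 → c = 1 := by
      intro c h
      have := congrArg (fun t => g * t * g⁻¹) h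
      simpa [mul_assoc] using this
    refine ⟨fun h => h1 (mul_left_cancel (mul_right_cancel h)), fun h => h2 (key a h),
      fun h => h3 (key b h), ?_⟩
    simp only [mul_assoc, inv_mul_cancel_left, mul_inv_cancel_left]
    rw [← mul_assoc a, h4, mul_assoc]

lemma reachable_conj (g : G) {a b : G} (h : (commGraph G).Reachable a b) :
    (commGraph G).Reachable (g⁻¹ * a * g) (g⁻¹ * b * g) :=
  h.map (conjGraphHom g)

lemma ne_one_of_walk : ∀ {a b : G}, (commGraph G).Walk a b → a ≠ 1 → b ≠ 1 := by
  intro a b w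
  induction w with
  | nil => exact id
  | cons h _ ih => intro _; exact ih h.2.2.1

lemma ne_one_of_reachable {a b : G} (h : (commGraph G).Reachable a b) (ha : a ≠ 1) : b ≠ 1 := by
  obtain ⟨w⟩ := h
  exact ne_one_of_walk w ha

lemma reachable_of_commute {x w z : G} (hw : (commGraph G).Reachable x w) (hx : x ≠ 1)
    (hz : z ≠ 1) (hc : w * z = z * w) : (commGraph G).Reachable x z := by
  rcases eq_or_ne w z with rfl | hne
  · exact hw
  · exact hw.trans (SimpleGraph.Adj.reachable ⟨hne, ne_one_of_reachable hw hx, hz, hc⟩)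

end Aux

theorem stmt11 {G : Type*} [Group G] [Fintype G] (hZ : Subgroup.center G = ⊥)
    (x : G) (hx : x ≠ 1) (M : Subgroup G)
    (hM : ∀ g : G, g ∈ M ↔ ∀ z : G,
      ((commGraph G).Reachable x z ↔ (commGraph G).Reachable x (g⁻¹ * z * g))) :
    M = ⊤ ∨ ∀ p : ℕ, p.Prime → (∃ z : G, (commGraph G).Reachable x z ∧ p ∣ orderOf z) →
      (p ∣ Nat.card ↥M ∧ ∀ g : G, g ∉ M →
        ¬ p ∣ Nat.card ↥(M ⊓ M.map (MulAut.conj g⁻¹).toMonoidHom)) := by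
  classical
  refine Or.inr ?_
  rintro p hp ⟨z, hzR, hpz⟩
  haveI := Fact.mk hp
  -- every element of the component of x lies in M
  have memM : ∀ y : G, (commGraph G).Reachable x y → y ∈ M := by
    intro y hy
    rw [hM]
    intro c
    constructor
    · intro hc
      have h1 : (commGraph G).Reachable (y⁻¹ * y * y) (y⁻¹ * c * y) :=
        reachable_conj y (hy.symm.trans hc)
      exact hy.trans (by simpa using h1)
    · intro hc
      have h1 : (commGraph G).Reachable ((y⁻¹)⁻¹ * y * y⁻¹) ((y⁻¹)⁻¹ * (y⁻¹ * c * y) * y⁻¹) :=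
        reachable_conj y⁻¹ (hy.symm.trans hc)
      have h2 : (commGraph G).Reachable y c := by simpa [mul_assoc] using h1
      exact hy.trans h2
  -- an element w of order p in the component of x
  obtain ⟨w', hw'⟩ := exists_prime_orderOf_dvd_card' (G := Subgroup.zpowers z) p
    (by rw [Nat.card_zpowers]; exact hpz)
  have hwo : orderOf (w' : G) = p := by rw [Subgroup.orderOf_coe, hw']
  have hwz : (w' : G) * z = z * (w' : G) := by
    obtain ⟨k, hk⟩ := w'.2
    rw [← hk]
    show z ^ k * z = z * z ^ k
    exact ((Commute.refl z).zpow_left k).eq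
  have hw1 : (w' : G) ≠ 1 := by
    intro h
    rw [h, orderOf_one] at hwo
    exact hp.one_lt.ne' hwo.symm
  have hwR : (commGraph G).Reachable x (w' : G) :=
    reachable_of_commute hzR hx hw1 (by rw [hwz])
  set w : G := (w' : G) with hwdef
  have hwM : w ∈ M := memM w hwR
  -- the action of M on the component of x
  set S := {y : G // (commGraph G).Reachable x y} with hS
  letI : MulAction M S :=
    { smul := fun m s => ⟨(m : G) * s * (m : G)⁻¹, by
        have h1 := ((hM ((m : G)⁻¹)).mp (M.inv_mem m.2) s.1).mp s.2
        simpa using h1⟩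
      one_smul := fun s => by
        apply Subtype.ext
        simp [HSMul.hSMul, SMul.smul]
      mul_smul := fun m n s => by
        apply Subtype.ext
        simp [HSMul.hSMul, SMul.smul, mul_assoc] }
  have smul_val : ∀ (m : M) (s : S), ((m • s : S) : G) = (m : G) * s * (m : G)⁻¹ :=
    fun _ _ => rfl
  -- key: any element of M of order p is in the component of x
  have key : ∀ u : G, u ∈ M → orderOf u = p → (commGraph G).Reachable x u := by
    intro u huM huo
    have hu1 : u ≠ 1 := by
      intro h1; rw [h1, orderOf_one] at huo; exact hp.one_lt.ne' huo.symm
    set P := Subgroup.zpowers (⟨u, huM⟩ : M) with hP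
    haveI hPp : IsPGroup p P := IsPGroup.of_card
      (by rw [Nat.card_zpowers, Subgroup.orderOf_mk, huo, pow_one])
    have hmod : Nat.card S ≡ Nat.card (MulAction.fixedPoints P S) [MOD p] :=
      hPp.card_modEq_card_fixedPoints S
    have hfix_nonempty : (MulAction.fixedPoints P S).Nonempty := by
      by_contra hempty
      rw [Set.not_nonempty_iff_eq_empty] at hempty
      have hzero : Nat.card (MulAction.fixedPoints P S) = 0 := by rw [hempty]; simp
      have hdvdS : p ∣ Nat.card S :=
        (Nat.modEq_zero_iff_dvd).mp (hmod.trans (by rw [hzero]))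
      -- now the action of ⟨w⟩
      set Q := Subgroup.zpowers (⟨w, hwM⟩ : M) with hQ
      haveI hQp : IsPGroup p Q := IsPGroup.of_card
        (by rw [Nat.card_zpowers, Subgroup.orderOf_mk, hwo, pow_one])
      have hmodQ : Nat.card S ≡ Nat.card (MulAction.fixedPoints Q S) [MOD p] :=
        hQp.card_modEq_card_fixedPoints S
      have hdvdFQ : p ∣ Nat.card (MulAction.fixedPoints Q S) :=
        (Nat.modEq_zero_iff_dvd).mp
          (hmodQ.symm.trans ((Nat.modEq_zero_iff_dvd).mpr hdvdS))
      -- fixed points of Q ≃ nontrivial elements of the centralizer of w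
      set C := Subgroup.centralizer ({w} : Set G) with hC
      have e : MulAction.fixedPoints Q S ≃ {c : C // c ≠ (1 : C)} := by
        refine
          { toFun := fun s => ⟨⟨((s : S) : G), ?_⟩, ?_⟩
            invFun := fun c => ⟨⟨((c : C) : G), ?_⟩, ?_⟩
            left_inv := fun s => by apply Subtype.ext; apply Subtype.ext; rfl
            right_inv := fun c => by apply Subtype.ext; apply Subtype.ext; rfl }
        · -- membership in centralizer
          rw [hC, Subgroup.mem_centralizer_singleton_iff]
          have hfix := s.2 ⟨⟨w, hwM⟩, Subgroup.mem_zpowers _⟩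
          have hval : w * ((s : S) : G) * w⁻¹ = ((s : S) : G) :=
            congrArg Subtype.val hfix
          calc ((s : S) : G) * w = (w * ((s : S) : G) * w⁻¹) * w := by rw [hval]
            _ = w * ((s : S) : G) := by group
        · -- nontrivial
          intro hone
          have : ((s : S) : G) = 1 := congrArg Subtype.val hone
          exact ne_one_of_reachable (s : S).2 hx this
        · -- reachable from x
          have hcw : ((c : C) : G) * w = w * ((c : C) : G) :=
            (Subgroup.mem_centralizer_singleton_iff).mp (c : C).2
          have hc1 : ((c : C) : G) ≠ 1 := by
            intro h1
            exact c.2 (Subtype.ext h1)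
          exact reachable_of_commute hwR hx hc1 hcw.symm
        · -- fixed under Q
          intro q
          obtain ⟨k, hk⟩ := q.2
          apply Subtype.ext
          have hq : ((q : M) : G) = w ^ k := by
            rw [← hk]; rfl
          have hcw : Commute ((c : C) : G) w :=
            (Subgroup.mem_centralizer_singleton_iff).mp (c : C).2
          have hcomm : Commute (w ^ k) ((c : C) : G) := (hcw.symm.zpow_left k)
          show ((q : ↥M) : G) * ((c : C) : G) * (((q : ↥M) : G))⁻¹ = ((c : C) : G)
          rw [hq, hcomm.eq]
          group
      have hcardFQ : Nat.card (MulAction.fixedPoints Q S) = Nat.card C - 1 := by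
        rw [Nat.card_congr e]
        haveI : Fintype C := Fintype.ofFinite C
        rw [Nat.card_eq_fintype_card, Nat.card_eq_fintype_card]
        rw [Fintype.card_subtype_compl (p := fun c : C => c = 1)]
        rw [Fintype.card_subtype_eq (1 : C)]
      have hpC : p ∣ Nat.card C := by
        refine hwo ▸ Subgroup.orderOf_dvd_natCard C ?_
        rw [hC, Subgroup.mem_centralizer_singleton_iff]
      have hCpos : 1 ≤ Nat.card C := Nat.one_le_iff_ne_zero.mpr Nat.card_pos.ne'
      have : p ∣ 1 := by
        have h1 : p ∣ Nat.card C - (Nat.card C - 1) := Nat.dvd_sub hpC (hcardFQ ▸ hdvdFQ)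
        rwa [Nat.sub_sub_self hCpos] at h1
      exact hp.one_lt.ne' (Nat.dvd_one.mp this)
    obtain ⟨s, hs⟩ := hfix_nonempty
    have hfixu := hs ⟨⟨u, huM⟩, Subgroup.mem_zpowers _⟩
    have hcomm : u * (s : G) * u⁻¹ = (s : G) := congrArg Subtype.val hfixu
    have hus : u * (s : G) = (s : G) * u := by
      calc u * (s : G) = (u * (s : G) * u⁻¹) * u := by group
        _ = (s : G) * u := by rw [hcomm]
    exact reachable_of_commute s.2 hx hu1 hus.symm
  constructor
  · exact hwo ▸ M.orderOf_dvd_natCard hwM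
  · intro g hg hdvd
    obtain ⟨h', hh'⟩ := exists_prime_orderOf_dvd_card'
      (G := ↥(M ⊓ M.map (MulAut.conj g⁻¹).toMonoidHom)) p hdvd
    set h : G := (h' : G) with hhdef
    have hho : orderOf h = p := by rw [hhdef, Subgroup.orderOf_coe, hh']
    have hhmem := h'.2
    rw [Subgroup.mem_inf] at hhmem
    have hhM : h ∈ M := hhmem.1
    obtain ⟨m, hmM, hmeq⟩ := hhmem.2
    -- m = g * h * g⁻¹ ∈ M
    have hmeq' : g⁻¹ * m * g = h := by
      simpa using hmeq
    have hmo : orderOf m = p := by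
      rw [← hho, ← hmeq']
      have : g⁻¹ * m * g = (MulAut.conj g⁻¹) m := by simp
      rw [this, MulEquiv.orderOf_eq]
    have hRh : (commGraph G).Reachable x h := key h hhM hho
    have hRm : (commGraph G).Reachable x m := key m hmM hmo
    apply hg
    rw [hM]
    intro c
    constructor
    · intro hc
      have h1 : (commGraph G).Reachable (g⁻¹ * m * g) (g⁻¹ * c * g) :=
        reachable_conj g (hRm.symm.trans hc)
      rw [hmeq'] at h1
      exact hRh.trans h1
    · intro hc
      have h1 : (commGraph G).Reachable ((g⁻¹)⁻¹ * h * g⁻¹) ((g⁻¹)⁻¹ * (g⁻¹ * c * g) * g⁻¹) :=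
        reachable_conj g⁻¹ (hRh.symm.trans hc)
      have h2 : (commGraph G).Reachable (g * h * g⁻¹) c := by simpa [mul_assoc] using h1
      rw [← hmeq'] at h2
      have h3 : (commGraph G).Reachable m c := by
        have : g * (g⁻¹ * m * g) * g⁻¹ = m := by group
        rwa [this] at h2
      exact hRm.trans h3
end

section
/- Let X be a group with a proper nontrivial normal subgroup J. Then X is a Frobenius group with kernel J if and only if C_X(j) ≤ J for all non-identity j ∈ J. -/
lemma aux_center {P : Type*} [Group P] [Finite P] {p : ℕ} [Fact p.Prime]
    (hP : IsPGroup p P) (N : Subgroup P) [N.Normal] (hN : N ≠ ⊥) :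
    ∃ g : P, g ∈ N ∧ g ≠ 1 ∧ g ∈ Subgroup.center P := by
  have hPN : IsPGroup p N := hP.to_subgroup N
  have hNd : p ∣ Nat.card N := by
    obtain ⟨n, hn0, hn⟩ := hPN.nontrivial_iff_card.mp
      ((Subgroup.nontrivial_iff_ne_bot N).mpr hN)
    exact hn ▸ dvd_pow_self _ hn0.ne'
  have hconj : IsPGroup p (ConjAct P) := hP.of_equiv ConjAct.toConjAct
  have h1 : (1 : N) ∈ MulAction.fixedPoints (ConjAct P) N := by
    intro g
    apply Subtype.ext
    rw [ConjAct.Subgroup.val_conj_smul]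
    simp [ConjAct.smul_def]
  obtain ⟨b, hb, hb1⟩ := hconj.exists_fixed_point_of_prime_dvd_card_of_fixed_point
    (α := N) hNd h1
  refine ⟨(b : P), b.2, ?_, ?_⟩
  · intro h
    exact hb1 (Subtype.ext h.symm)
  · rw [Subgroup.mem_center_iff]
    intro g
    have h2 : g * (b : P) * g⁻¹ = b := by
      have := congrArg Subtype.val (hb (ConjAct.toConjAct g))
      rwa [ConjAct.Subgroup.val_conj_smul, ConjAct.toConjAct_smul] at this
    calc g * (b : P) = (g * b * g⁻¹) * g := by group
      _ = (b : P) * g := by rw [h2]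

theorem stmt17 {X : Type*} [Group X] [Fintype X] (J : Subgroup X)
    (hJ : J.Normal) (hJbot : J ≠ ⊥) (hJtop : J ≠ ⊤) :
    (∃ K : Subgroup X, J ⊓ K = ⊥ ∧ (∀ g : X, ∃ j ∈ J, ∃ k ∈ K, g = j * k) ∧
        ∀ k ∈ K, k ≠ 1 → ∀ j ∈ J, Commute k j → j = 1) ↔
      (∀ j ∈ J, j ≠ 1 → Subgroup.centralizer {j} ≤ J) := by
  constructor
  · rintro ⟨K, hJK, hfac, hfpf⟩ j hjJ hj1 x hx
    obtain ⟨j', hj'J, k, hkK, hxeq⟩ := hfac x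
    by_cases hk1 : k = 1
    · simpa [hxeq, hk1] using hj'J
    -- the map a ↦ a⁻¹ * (k * a * k⁻¹) : J → J is injective, hence surjective
    have hψinj : Function.Injective
        (fun a : J => (⟨(a : X)⁻¹ * (k * a * k⁻¹),
          J.mul_mem (J.inv_mem a.2) (hJ.conj_mem _ a.2 k)⟩ : J)) := by
      rintro ⟨a, ha⟩ ⟨b, hb⟩ hab
      simp only [Subtype.mk.injEq] at hab
      have h2 : k * b * k⁻¹ = b * (a⁻¹ * (k * a * k⁻¹)) := by
        rw [hab]; group
      have hcomm : Commute k (b * a⁻¹) := by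
        calc k * (b * a⁻¹) = (k * b * k⁻¹) * (k * a⁻¹ * k⁻¹) * k := by group
          _ = (b * (a⁻¹ * (k * a * k⁻¹))) * (k * a⁻¹ * k⁻¹) * k := by rw [h2]
          _ = (b * a⁻¹) * k := by group
      have hba := hfpf k hkK hk1 (b * a⁻¹) (J.mul_mem hb (J.inv_mem ha)) hcomm
      rw [mul_inv_eq_one] at hba
      exact Subtype.ext hba.symm
    have hψsurj := Finite.surjective_of_injective hψinj
    obtain ⟨⟨a, haJ⟩, hha⟩ := hψsurj ⟨j', hj'J⟩
    simp only [Subtype.mk.injEq] at hha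
    -- so x = j' * k = a⁻¹ * k * a
    have hxa : x = a⁻¹ * k * a := by
      rw [hxeq, ← hha]; group
    -- x commutes with j
    have hxj : x * j * x⁻¹ = j := by
      rw [Subgroup.mem_centralizer_iff] at hx
      have := hx j (Set.mem_singleton j)
      rw [← this]; group
    have hconj' : (a⁻¹ * k * a) * j * (a⁻¹ * k * a)⁻¹ = j := by rw [← hxa]; exact hxj
    have hcomm2 : Commute k (a * j * a⁻¹) := by
      have hkey : k * (a * j * a⁻¹) * k⁻¹ = a * j * a⁻¹ := by
        calc k * (a * j * a⁻¹) * k⁻¹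
            = a * ((a⁻¹ * k * a) * j * (a⁻¹ * k * a)⁻¹) * a⁻¹ := by group
          _ = a * j * a⁻¹ := by rw [hconj']
      calc k * (a * j * a⁻¹) = (k * (a * j * a⁻¹) * k⁻¹) * k := by group
        _ = (a * j * a⁻¹) * k := by rw [hkey]
    have hj0 := hfpf k hkK hk1 (a * j * a⁻¹)
      (J.mul_mem (J.mul_mem haJ hjJ) (J.inv_mem haJ)) hcomm2
    exact absurd (by
      have : j = a⁻¹ * (a * j * a⁻¹) * a := by group
      rw [hj0] at this
      simpa using this) hj1
  · intro hcent
    have hcop : Nat.Coprime (Nat.card J) J.index := by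
      by_contra hnc
      obtain ⟨p, hp, hpJ, hpQ⟩ := Nat.Prime.not_coprime_iff_dvd.mp hnc
      haveI : Fact p.Prime := ⟨hp⟩
      haveI : Fintype J := Fintype.ofFinite _
      obtain ⟨g, hg⟩ := exists_prime_orderOf_dvd_card (G := J) p
        (by rwa [← Nat.card_eq_fintype_card])
      have hpgrp : IsPGroup p (Subgroup.zpowers (g : X)) := by
        apply IsPGroup.of_card
        rw [Nat.card_zpowers, Subgroup.orderOf_coe, hg, pow_one]
      obtain ⟨P, hP⟩ := hpgrp.exists_le_sylow
      haveI : (J.subgroupOf P.toSubgroup).Normal := hJ.subgroupOf _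
      have hNbot : J.subgroupOf P.toSubgroup ≠ ⊥ := by
        intro h
        have hgP : (g : X) ∈ P.toSubgroup := hP (Subgroup.mem_zpowers _)
        have hmem : (⟨(g : X), hgP⟩ : P.toSubgroup) ∈ J.subgroupOf P.toSubgroup := by
          simp [Subgroup.mem_subgroupOf]
        rw [h, Subgroup.mem_bot] at hmem
        have hg1 : (g : X) = 1 := congrArg Subtype.val hmem
        have : orderOf g = 1 := orderOf_eq_one_iff.mpr (Subtype.ext hg1)
        rw [hg] at this
        exact hp.one_lt.ne' this
      obtain ⟨z, hzN, hz1, hzc⟩ := aux_center P.2 (J.subgroupOf P.toSubgroup) hNbot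
      rw [Subgroup.mem_subgroupOf] at hzN
      have hz1' : (z : X) ≠ 1 := fun h => hz1 (Subtype.ext h)
      have hPle : P.toSubgroup ≤ J := by
        intro x hxP
        apply hcent (z : X) hzN hz1'
        rw [Subgroup.mem_centralizer_iff]
        rintro s rfl
        have := (Subgroup.mem_center_iff.mp hzc) ⟨x, hxP⟩
        exact (congrArg Subtype.val this).symm
      have hdvd : p ∣ P.toSubgroup.index := by
        have hidx : J.index ∣ P.toSubgroup.index := Subgroup.index_dvd_of_le hPle
        exact dvd_trans hpQ hidx
      exact P.not_dvd_index hdvd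
    obtain ⟨K, hK⟩ := Subgroup.exists_right_complement'_of_coprime hcop
    refine ⟨K, ?_, ?_, ?_⟩
    · exact hK.disjoint.eq_bot
    · intro g
      obtain ⟨⟨j, k⟩, hjk⟩ := hK.existsUnique g
      exact ⟨j, j.2, k, k.2, hjk.1.symm⟩
    · intro k hkK hk1 j hjJ hcomm
      by_contra hj1
      have hkC : k ∈ Subgroup.centralizer {j} := by
        rw [Subgroup.mem_centralizer_iff]
        rintro s rfl
        exact hcomm.symm.eq
      have hkJ : k ∈ J := hcent j hjJ hj1 hkC
      have hmem : k ∈ J ⊓ K := ⟨hkJ, hkK⟩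
      rw [hK.disjoint.eq_bot, Subgroup.mem_bot] at hmem
      exact hk1 hmem
end

section
/- Let n ≥ 9 and let G be Sym(n) or Alt(n). If x and y are elements of order 9 in G whose cubes are products of three disjoint 3-cycles, then x and y are at distance at most 6 in the commuting graph of G. -/
open Equiv Equiv.Perm SimpleGraph

lemma tc_ne_one {α : Type*} [DecidableEq α] [Fintype α] {σ : Perm α}
    (h : σ.IsThreeCycle) : σ ≠ 1 := by
  intro h1; have := h.card_support; rw [h1] at this; simp at this

lemma disj_ne {α : Type*} {σ τ : Perm α} (h : σ.Disjoint τ) (h1 : σ ≠ 1) : σ ≠ τ := by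
  intro he; subst he
  exact h1 (Equiv.ext fun a => (h a).elim id id)

set_option maxHeartbeats 1000000 in
lemma exists_disjoint_threeCycle {n : ℕ} (hn : 9 ≤ n) {c d : Perm (Fin n)}
    (hc : c.IsThreeCycle) (hd : d.IsThreeCycle) :
    ∃ e : Perm (Fin n), e.IsThreeCycle ∧ e.Disjoint c ∧ e.Disjoint d := by
  set s := (c.support ∪ d.support)ᶜ with hs
  have hcard : 3 ≤ s.card := by
    have h1 : (c.support ∪ d.support).card ≤ 6 := by
      calc (c.support ∪ d.support).card ≤ c.support.card + d.support.card :=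
        Finset.card_union_le _ _
      _ ≤ 6 := by rw [hc.card_support, hd.card_support]
    have h2 : s.card = n - (c.support ∪ d.support).card := by
      rw [hs, Finset.card_compl, Fintype.card_fin]
    omega
  obtain ⟨a, ha⟩ : ∃ a, a ∈ s := Finset.card_pos.mp (by omega)
  obtain ⟨b, hb⟩ : ∃ b, b ∈ s.erase a := Finset.card_pos.mp (by
    rw [Finset.card_erase_of_mem ha]; omega)
  obtain ⟨e, he⟩ : ∃ e, e ∈ (s.erase a).erase b := Finset.card_pos.mp (by
    rw [Finset.card_erase_of_mem hb, Finset.card_erase_of_mem ha]; omega)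
  have hab : a ≠ b := (Finset.ne_of_mem_erase hb).symm
  have hbe : b ≠ e := (Finset.ne_of_mem_erase he).symm
  have hae : a ≠ e := (Finset.ne_of_mem_erase (Finset.mem_of_mem_erase he)).symm
  have hbs : b ∈ s := Finset.mem_of_mem_erase hb
  have hes : e ∈ s := Finset.mem_of_mem_erase (Finset.mem_of_mem_erase he)
  have hsup : (swap a b * swap b e).support = {a, b, e} :=
    support_swap_mul_swap (by simp [hab, hbe, hae])
  have htc : (swap a b * swap b e).IsThreeCycle := card_support_eq_three_iff.mp (by
    rw [hsup, Finset.card_insert_of_notMem (by simp [hab, hae]),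
      Finset.card_insert_of_notMem (by simp [hbe]), Finset.card_singleton])
  refine ⟨swap a b * swap b e, htc, ?_, ?_⟩ <;>
  · rw [disjoint_iff_disjoint_support, hsup]
    refine Finset.disjoint_left.mpr ?_
    intro t ht
    simp only [Finset.mem_insert, Finset.mem_singleton] at ht
    have hts : t ∈ s := by rcases ht with rfl|rfl|rfl <;> assumption
    rw [hs, Finset.mem_compl, Finset.mem_union] at hts
    tauto

lemma commGraph_adj {G : Type*} [Group G] {a b : G} (h1 : a ≠ b) (h2 : a ≠ 1)
    (h3 : b ≠ 1) (h4 : a * b = b * a) : (commGraph G).Adj a b := ⟨h1, h2, h3, h4⟩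

theorem stmt18 (n : ℕ) (hn : 9 ≤ n) (G : Subgroup (Equiv.Perm (Fin n)))
    (hG : G = ⊤ ∨ G = alternatingGroup (Fin n))
    (x y : ↥G) (hx : orderOf x = 9) (hy : orderOf y = 9)
    (hx3 : ∃ c1 c2 c3 : Equiv.Perm (Fin n),
      c1.IsThreeCycle ∧ c2.IsThreeCycle ∧ c3.IsThreeCycle ∧
      c1.Disjoint c2 ∧ c1.Disjoint c3 ∧ c2.Disjoint c3 ∧
      (x : Equiv.Perm (Fin n)) ^ 3 = c1 * c2 * c3)
    (hy3 : ∃ c1 c2 c3 : Equiv.Perm (Fin n),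
      c1.IsThreeCycle ∧ c2.IsThreeCycle ∧ c3.IsThreeCycle ∧
      c1.Disjoint c2 ∧ c1.Disjoint c3 ∧ c2.Disjoint c3 ∧
      (y : Equiv.Perm (Fin n)) ^ 3 = c1 * c2 * c3) :
    ∃ w : (commGraph ↥G).Walk x y, w.length ≤ 6 := by
  obtain ⟨c1, c2, c3, hc1, hc2, hc3, h12, h13, h23, hxe⟩ := hx3
  obtain ⟨d1, d2, d3, hd1, hd2, hd3, k12, k13, k23, hye⟩ := hy3
  obtain ⟨e, hetc, hec1, hed1⟩ := exists_disjoint_threeCycle hn hc1 hd1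
  have hmem : ∀ p : Perm (Fin n), p.IsThreeCycle → p ∈ G := by
    rcases hG with rfl | rfl
    · exact fun p _ => Subgroup.mem_top p
    · exact fun p hp => hp.mem_alternatingGroup
  set X3 : ↥G := x ^ 3 with hX3
  set Y3 : ↥G := y ^ 3 with hY3
  set C1 : ↥G := ⟨c1, hmem c1 hc1⟩ with hC1
  set E : ↥G := ⟨e, hmem e hetc⟩ with hE
  set D1 : ↥G := ⟨d1, hmem d1 hd1⟩ with hD1
  have hX3c : (X3 : Perm (Fin n)) = c1 * c2 * c3 := by
    rw [hX3]; push_cast; exact hxe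
  have hY3c : (Y3 : Perm (Fin n)) = d1 * d2 * d3 := by
    rw [hY3]; push_cast; exact hye
  -- non-identity facts
  have hxne1 : x ≠ 1 := by intro h; rw [h, orderOf_one] at hx; omega
  have hyne1 : y ≠ 1 := by intro h; rw [h, orderOf_one] at hy; omega
  have hX3ne1 : X3 ≠ 1 := by
    intro h
    have := orderOf_dvd_of_pow_eq_one (hX3 ▸ h)
    rw [hx] at this; omega
  have hY3ne1 : Y3 ≠ 1 := by
    intro h
    have := orderOf_dvd_of_pow_eq_one (hY3 ▸ h)
    rw [hy] at this; omega
  have hxX3 : x ≠ X3 := by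
    intro h
    have h2 : x ^ 2 = 1 := by
      have h3 : x * x ^ 2 = x * 1 := by
        rw [mul_one, ← pow_succ']; exact (hX3 ▸ h).symm
      exact mul_left_cancel h3
    have := orderOf_dvd_of_pow_eq_one h2
    rw [hx] at this; omega
  have hyY3 : y ≠ Y3 := by
    intro h
    have h2 : y ^ 2 = 1 := by
      have h3 : y * y ^ 2 = y * 1 := by
        rw [mul_one, ← pow_succ']; exact (hY3 ▸ h).symm
      exact mul_left_cancel h3
    have := orderOf_dvd_of_pow_eq_one h2
    rw [hy] at this; omega
  have hC1ne1 : C1 ≠ 1 := fun h => tc_ne_one hc1 (congrArg Subtype.val h)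
  have hEne1 : E ≠ 1 := fun h => tc_ne_one hetc (congrArg Subtype.val h)
  have hD1ne1 : D1 ≠ 1 := fun h => tc_ne_one hd1 (congrArg Subtype.val h)
  have hX3C1 : X3 ≠ C1 := by
    intro h
    have hcoe : c1 * c2 * c3 = c1 := by rw [← hX3c, h]
    rw [mul_assoc] at hcoe
    have h1 : c1 * (c2 * c3) = c1 * 1 := by rw [mul_one]; exact hcoe
    have h2 : c2 * c3 = 1 := mul_left_cancel h1
    exact tc_ne_one hc2 ((h23.mul_eq_one_iff.mp h2).1)
  have hY3D1 : Y3 ≠ D1 := by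
    intro h
    have hcoe : d1 * d2 * d3 = d1 := by rw [← hY3c, h]
    rw [mul_assoc] at hcoe
    have h1 : d1 * (d2 * d3) = d1 * 1 := by rw [mul_one]; exact hcoe
    have h2 : d2 * d3 = 1 := mul_left_cancel h1
    exact tc_ne_one hd2 ((k23.mul_eq_one_iff.mp h2).1)
  have hC1E : C1 ≠ E := fun h =>
    disj_ne hec1 (tc_ne_one hetc) ((congrArg Subtype.val h).symm)
  have hED1 : E ≠ D1 := fun h => disj_ne hed1 (tc_ne_one hetc) (congrArg Subtype.val h)
  -- commutations
  have hcX : Commute (c1 * c2 * c3) c1 :=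
    (((Commute.refl c1).mul_left h12.commute.symm).mul_left h13.commute.symm)
  have hcY : Commute (d1 * d2 * d3) d1 :=
    (((Commute.refl d1).mul_left k12.commute.symm).mul_left k13.commute.symm)
  have a1 : (commGraph ↥G).Adj x X3 :=
    commGraph_adj hxX3 hxne1 hX3ne1 (by rw [hX3, ← pow_succ, ← pow_succ'])
  have a2 : (commGraph ↥G).Adj X3 C1 :=
    commGraph_adj hX3C1 hX3ne1 hC1ne1 (Subtype.ext (by push_cast [hX3c, hC1]; exact hcX.eq))
  have a3 : (commGraph ↥G).Adj C1 E :=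
    commGraph_adj hC1E hC1ne1 hEne1 (Subtype.ext (by push_cast [hC1, hE]; exact hec1.commute.symm.eq))
  have a4 : (commGraph ↥G).Adj E D1 :=
    commGraph_adj hED1 hEne1 hD1ne1 (Subtype.ext (by push_cast [hE, hD1]; exact hed1.commute.eq))
  have a5 : (commGraph ↥G).Adj D1 Y3 :=
    commGraph_adj hY3D1.symm hD1ne1 hY3ne1 (Subtype.ext (by push_cast [hY3c, hD1]; exact hcY.symm.eq))
  have a6 : (commGraph ↥G).Adj Y3 y :=
    commGraph_adj hyY3.symm hY3ne1 hyne1 (by rw [hY3, ← pow_succ, ← pow_succ'])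
  exact ⟨.cons a1 (.cons a2 (.cons a3 (.cons a4 (.cons a5 (.cons a6 .nil))))), by simp⟩
end
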